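/- arXiv:1902.05853 — 8 statements merged into one kernel-verified Lean document; each statement's English description precedes it below -/
import Mathlib

section
/- Let d ≥ 2 and let x_1, ..., x_d be nonnegative real numbers. For every proper subset J of {1,...,d} (with the convention that the maximum over the empty set is 0), the alternating sum S(J) := Σ_{L : J ⊆ L ⊆ {1,...,d}} (-1)^{|L \ J| + 1} · max_{j ∈ L} x_j is nonnegative. -/
/-!
Writing `a` for the maximum over `J` and `K` for the complement of `J`, the sum is
`-∑_{M ⊆ K} (-1)^|M| max(a, max_M x)`. Splitting off one element `k` of `K` and using
`min(b, m) + max(b, m) = b + m` shows by induction that `∑_{M ⊆ K} (-1)^|M| max(a, max_M x)`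
equals `a - min_{k ∈ K} max(a, x_k)` for every nonempty `K`, so the sum is
`min_{k ∈ K} max(a, x_k) - a ≥ 0`. Since `{min(b, m), max(b, m)} = {b, m}`, the identity survives
applying an arbitrary function to every maximum.
-/

open Finset

open scoped NNReal

variable {ι α R : Type*}

namespace Finset

theorem sum_Icc_eq_sum_powerset_sdiff [DecidableEq ι] [AddCommMonoid R] {s t : Finset ι}
    (h : s ⊆ t) (f : Finset ι → R) :
    ∑ u ∈ Icc s t, f u = ∑ v ∈ (t \ s).powerset, f (s ∪ v) := by
  rw [Icc_eq_image_powerset h, sum_image]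
  intro v hv w hw hvw
  have hv' : Disjoint s v := disjoint_of_subset_right (mem_powerset.mp hv) disjoint_sdiff
  have hw' : Disjoint s w := disjoint_of_subset_right (mem_powerset.mp hw) disjoint_sdiff
  rw [← union_sdiff_cancel_left hv', ← union_sdiff_cancel_left hw']
  exact congrArg (· \ s) hvw

theorem biSup_eq_sup [ConditionallyCompleteLinearOrderBot α] (s : Finset ι) (f : ι → α) :
    ⨆ i ∈ s, f i = s.sup f := by
  have hle : ∀ i, ⨆ _ : i ∈ s, f i ≤ s.sup f := fun i => ciSup_le' fun hi => le_sup hi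
  refine le_antisymm (ciSup_le' hle) (Finset.sup_le fun i hi => ?_)
  exact le_ciSup_of_le ⟨s.sup f, Set.forall_mem_range.2 hle⟩ i
    (ciSup_pos (f := fun _ => f i) hi).ge

end Finset

theorem apply_inf_add_apply_sup [LinearOrder α] [AddCommMagma R] (g : α → R) (a b : α) :
    g (a ⊓ b) + g (a ⊔ b) = g a + g b := by
  rcases le_total a b with h | h
  · rw [inf_of_le_left h, sup_of_le_right h]
  · rw [inf_of_le_right h, sup_of_le_left h, add_comm]

theorem sum_powerset_neg_one_pow_mul_apply_sup [DecidableEq ι] [LinearOrder α] [OrderBot α]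
    [Ring R] (g : α → R) (y : ι → α) {K : Finset ι} (hK : K.Nonempty) (a : α) :
    ∑ M ∈ K.powerset, (-1) ^ #M * g (a ⊔ M.sup y) = g a - g (K.inf' hK (a ⊔ y ·)) := by
  induction hK using Nonempty.cons_induction generalizing a with
  | singleton k =>
    rw [inf'_singleton, ← insert_empty, sum_powerset_insert (notMem_empty k)]
    simp [sub_eq_add_neg]
  | cons k K hk hK ih =>
    have h_insert : ∀ M ∈ K.powerset, (-1) ^ #(insert k M) * g (a ⊔ (insert k M).sup y)
        = -((-1) ^ #M * g ((a ⊔ y k) ⊔ M.sup y)) := fun M hM => by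
      rw [card_insert_of_notMem fun hkM => hk (mem_powerset.mp hM hkM), sup_insert, ← sup_assoc,
        pow_succ]
      noncomm_ring
    have h_inf : K.inf' hK ((a ⊔ y k) ⊔ y ·) = (a ⊔ y k) ⊔ K.inf' hK (a ⊔ y ·) := by
      rw [inf'_sup_distrib_left]
      exact inf'_congr hK rfl fun j _ => by rw [sup_sup_sup_comm, sup_idem, sup_assoc]
    rw [inf'_cons hK, cons_eq_insert, sum_powerset_insert hk, sum_congr rfl h_insert,
      sum_neg_distrib, ih, ih, h_inf, eq_sub_of_add_eq (apply_inf_add_apply_sup g _ _)]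
    abel

theorem max_alternation_nonneg_general (d : ℕ) (x : Fin d → ℝ)
    (hx : ∀ j, 0 ≤ x j) (J : Finset (Fin d)) (hJ : J ≠ Finset.univ) :
    0 ≤ ∑ L ∈ Finset.univ.powerset.filter (fun L => J ⊆ L),
        ((-1 : ℝ)) ^ ((L \ J).card + 1) * (⨆ j ∈ (L : Finset (Fin d)), x j) := by
  set y : Fin d → ℝ≥0 := fun j => ⟨x j, hx j⟩
  have h_iSup : ∀ L : Finset (Fin d), ⨆ j ∈ L, x j = ((L.sup y : ℝ≥0) : ℝ) := fun L => by
    simp only [← biSup_eq_sup, NNReal.coe_iSup]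
    rfl
  have hK : (univ \ J).Nonempty := sdiff_nonempty.mpr fun h => hJ (univ_subset_iff.mp h)
  rw [← Icc_eq_filter_powerset, sum_Icc_eq_sum_powerset_sdiff (subset_univ J)]
  calc (0 : ℝ)
      ≤ (((univ \ J).inf' hK (J.sup y ⊔ y ·) : ℝ≥0) : ℝ) - ((J.sup y : ℝ≥0) : ℝ) :=
        sub_nonneg.mpr (NNReal.coe_le_coe.mpr (le_inf' hK _ fun _ _ => le_sup_left))
    _ = -∑ M ∈ (univ \ J).powerset, (-1) ^ #M * ((J.sup y ⊔ M.sup y : ℝ≥0) : ℝ) := by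
        rw [sum_powerset_neg_one_pow_mul_apply_sup ((↑) : ℝ≥0 → ℝ) y hK, neg_sub]
    _ = _ := by
        rw [← sum_neg_distrib]
        refine sum_congr rfl fun M hM => ?_
        have hJM : Disjoint J M := disjoint_of_subset_right (mem_powerset.mp hM) disjoint_sdiff
        rw [union_sdiff_cancel_left hJM, h_iSup, sup_union, pow_succ]
        ring

/-- Lemma A.4 (max-alternation): for nonnegative reals `x 1, ..., x d` and a proper
subset `J` of the index set, the alternating sum over supersets `L ⊇ J` of
`(-1)^(|L \ J| + 1) * max_{j ∈ L} x j` is nonnegative (max over ∅ is 0). -/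
theorem max_alternation_nonneg (d : ℕ) (hd : 2 ≤ d) (x : Fin d → ℝ)
    (hx : ∀ j, 0 ≤ x j) (J : Finset (Fin d)) (hJ : J ≠ Finset.univ) :
    0 ≤ ∑ L ∈ Finset.univ.powerset.filter (fun L => J ⊆ L),
        ((-1 : ℝ)) ^ ((L \ J).card + 1) * (⨆ j ∈ (L : Finset (Fin d)), x j) :=
  max_alternation_nonneg_general d x hx J hJ
end

section
/- Fix integers d ≥ 1 and 1 ≤ i ≤ d, and a real ξ > 0. Then Σ_{ℓ=1}^{i} C(i-1, ℓ-1) · Σ_{k=0}^{ℓ} C(ℓ, k) · (-1)^{k+1} · (d - ℓ + k)^{1/ξ} = (d + 1 - i)^{1/ξ} - (d - i)^{1/ξ}. -/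
open Finset

private def gAux (f : ℕ → ℝ) (ℓ a : ℕ) : ℝ :=
  ∑ k ∈ Finset.range (ℓ + 1), (Nat.choose ℓ k : ℝ) * (-1 : ℝ) ^ (k + 1) * f (a + k)

private lemma gAux_def (f : ℕ → ℝ) (ℓ a : ℕ) :
    gAux f ℓ a = ∑ k ∈ Finset.range (ℓ + 1),
      (Nat.choose ℓ k : ℝ) * (-1 : ℝ) ^ (k + 1) * f (a + k) := rfl

private lemma gAux_succ (f : ℕ → ℝ) (ℓ a : ℕ) :
    gAux f (ℓ + 1) a = gAux f ℓ a - gAux f ℓ (a + 1) := by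
  conv_lhs => rw [gAux_def]
  rw [Finset.sum_range_succ' (fun k => (Nat.choose (ℓ+1) k : ℝ) * (-1:ℝ)^(k+1) * f (a+k))]
  have h1 : ∀ k ∈ Finset.range (ℓ+1),
      (Nat.choose (ℓ+1) (k+1) : ℝ) * (-1:ℝ)^(k+1+1) * f (a+(k+1))
      = (Nat.choose ℓ k : ℝ) * (-1:ℝ)^(k+1+1) * f (a+(k+1))
        + (Nat.choose ℓ (k+1) : ℝ) * (-1:ℝ)^(k+1+1) * f (a+(k+1)) := by
    intro k _
    rw [Nat.choose_succ_succ]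
    push_cast
    ring
  rw [Finset.sum_congr rfl h1, Finset.sum_add_distrib]
  have h2 : ∑ k ∈ Finset.range (ℓ+1), (Nat.choose ℓ k : ℝ) * (-1:ℝ)^(k+1+1) * f (a+(k+1))
      = - gAux f ℓ (a+1) := by
    unfold gAux
    rw [← Finset.sum_neg_distrib]
    apply Finset.sum_congr rfl
    intro k _
    have : a + 1 + k = a + (k + 1) := by omega
    rw [this]
    ring
  have h3 : ∑ k ∈ Finset.range (ℓ+1), (Nat.choose ℓ (k+1) : ℝ) * (-1:ℝ)^(k+1+1) * f (a+(k+1))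
      = gAux f ℓ a + f a := by
    rw [Finset.sum_range_succ]
    have hz : (Nat.choose ℓ (ℓ+1) : ℝ) = 0 := by
      rw [Nat.choose_eq_zero_of_lt (by omega)]; norm_num
    rw [hz]
    unfold gAux
    rw [Finset.sum_range_succ' (fun k => (Nat.choose ℓ k : ℝ) * (-1:ℝ)^(k+1) * f (a+k))]
    simp only [Nat.choose_zero_right, Nat.cast_one, pow_one, add_zero, zero_mul, mul_zero]
    ring
  rw [h2, h3]
  simp only [Nat.choose_zero_right, Nat.cast_one, pow_one, add_zero]
  ring

private def TAux (f : ℕ → ℝ) (i e : ℕ) : ℝ :=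
  ∑ j ∈ Finset.range i, (Nat.choose (i - 1) j : ℝ) * gAux f (j + 1) (e + (i - 1 - j))

private lemma TAux_def (f : ℕ → ℝ) (i e : ℕ) :
    TAux f i e = ∑ j ∈ Finset.range i,
      (Nat.choose (i - 1) j : ℝ) * gAux f (j + 1) (e + (i - 1 - j)) := rfl

private lemma TAux_eq (f : ℕ → ℝ) : ∀ i, 1 ≤ i → ∀ e, TAux f i e = f (e + 1) - f e := by
  intro i hi
  induction i, hi using Nat.le_induction with
  | base =>
    intro e
    simp only [TAux_def, Finset.sum_range_one, Nat.choose_self]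
    rw [gAux_def]
    simp [Finset.sum_range_succ]
    ring
  | succ i hi ih =>
    intro e
    rw [TAux_def]
    have hsplit : ∀ j ∈ Finset.range (i + 1),
        (Nat.choose (i + 1 - 1) j : ℝ) * gAux f (j + 1) (e + (i + 1 - 1 - j))
        = (Nat.choose (i - 1) j : ℝ) * gAux f (j + 1) (e + (i - j))
          + (if j = 0 then 0 else (Nat.choose (i - 1) (j - 1) : ℝ))
              * gAux f (j + 1) (e + (i - j)) := by
      intro j hj
      have h1 : i + 1 - 1 = i := by omega
      rw [h1]
      rcases Nat.eq_zero_or_pos j with h0 | h0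
      · subst h0; simp
      · have hc : Nat.choose i j = Nat.choose (i - 1) j + Nat.choose (i - 1) (j - 1) := by
          obtain ⟨i', rfl⟩ : ∃ i', i = i' + 1 := ⟨i - 1, by omega⟩
          obtain ⟨j', rfl⟩ : ∃ j', j = j' + 1 := ⟨j - 1, by omega⟩
          simp only [Nat.add_sub_cancel, Nat.choose_succ_succ, Nat.succ_eq_add_one]
          omega
        rw [if_neg (by omega), hc]
        push_cast
        ring
    rw [Finset.sum_congr rfl hsplit, Finset.sum_add_distrib]
    have hA : ∑ j ∈ Finset.range (i + 1),
        (Nat.choose (i - 1) j : ℝ) * gAux f (j + 1) (e + (i - j))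
        = TAux f i (e + 1) := by
      rw [Finset.sum_range_succ]
      have hz : (Nat.choose (i - 1) i : ℝ) = 0 := by
        rw [Nat.choose_eq_zero_of_lt (by omega)]; norm_num
      rw [hz, zero_mul, add_zero, TAux_def]
      apply Finset.sum_congr rfl
      intro j hj
      have hj' : j < i := Finset.mem_range.mp hj
      have : e + (i - j) = e + 1 + (i - 1 - j) := by omega
      rw [this]
    have hB : ∑ j ∈ Finset.range (i + 1),
        (if j = 0 then 0 else (Nat.choose (i - 1) (j - 1) : ℝ))
          * gAux f (j + 1) (e + (i - j))
        = TAux f i e - TAux f i (e + 1) := by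
      rw [Finset.sum_range_succ' (fun j => (if j = 0 then 0 else (Nat.choose (i - 1) (j - 1) : ℝ))
          * gAux f (j + 1) (e + (i - j)))]
      simp only [if_neg (Nat.succ_ne_zero _), if_pos rfl, zero_mul, add_zero,
        Nat.add_sub_cancel]
      have : ∀ m ∈ Finset.range i,
          (Nat.choose (i - 1) m : ℝ) * gAux f (m + 1 + 1) (e + (i - (m + 1)))
          = (Nat.choose (i - 1) m : ℝ) * gAux f (m + 1) (e + (i - 1 - m))
            - (Nat.choose (i - 1) m : ℝ) * gAux f (m + 1) (e + 1 + (i - 1 - m)) := by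
        intro m hm
        have hm' : m < i := Finset.mem_range.mp hm
        have h1 : e + (i - (m + 1)) = e + (i - 1 - m) := by omega
        rw [h1, gAux_succ]
        have h2 : e + (i - 1 - m) + 1 = e + 1 + (i - 1 - m) := by omega
        rw [h2]
        ring
      rw [Finset.sum_congr rfl this, Finset.sum_sub_distrib, TAux_def, TAux_def]
      simp
    rw [hA, hB, ih e, ih (e + 1)]
    ring

/-- Equation (A.9): for `1 ≤ i ≤ d` and `ξ > 0`,
`Σ_{ℓ=1}^{i} C(i-1,ℓ-1) Σ_{k=0}^{ℓ} C(ℓ,k) (-1)^{k+1} (d-ℓ+k)^{1/ξ}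
  = (d+1-i)^{1/ξ} - (d-i)^{1/ξ}`. -/
theorem alternating_binomial_rpow_identity (d i : ℕ) (hd : 1 ≤ d)
    (hi1 : 1 ≤ i) (hid : i ≤ d) (ξ : ℝ) (hξ : 0 < ξ) :
    ∑ ℓ ∈ Finset.Icc 1 i, (Nat.choose (i - 1) (ℓ - 1) : ℝ) *
      ∑ k ∈ Finset.range (ℓ + 1),
        (Nat.choose ℓ k : ℝ) * (-1 : ℝ) ^ (k + 1) * ((d - ℓ + k : ℕ) : ℝ) ^ (1 / ξ)
    = ((d + 1 - i : ℕ) : ℝ) ^ (1 / ξ) - ((d - i : ℕ) : ℝ) ^ (1 / ξ) := by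
  set f : ℕ → ℝ := fun m => (m : ℝ) ^ (1 / ξ) with hf
  have key := TAux_eq f i hi1 (d - i)
  rw [TAux_def] at key
  have hL : ∑ ℓ ∈ Finset.Icc 1 i, (Nat.choose (i - 1) (ℓ - 1) : ℝ) *
      ∑ k ∈ Finset.range (ℓ + 1),
        (Nat.choose ℓ k : ℝ) * (-1 : ℝ) ^ (k + 1) * ((d - ℓ + k : ℕ) : ℝ) ^ (1 / ξ)
      = ∑ j ∈ Finset.range i,
          (Nat.choose (i - 1) j : ℝ) * gAux f (j + 1) (d - i + (i - 1 - j)) := by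
    rw [← Finset.Ico_add_one_right_eq_Icc, Finset.sum_Ico_eq_sum_range]
    have hr : i + 1 - 1 = i := by omega
    rw [hr]
    apply Finset.sum_congr rfl
    intro j hj
    have hj' : j < i := Finset.mem_range.mp hj
    have h1 : 1 + j - 1 = j := by omega
    have h2 : 1 + j = j + 1 := by omega
    rw [h1, h2, gAux_def]
    congr 1
    apply Finset.sum_congr rfl
    intro k _
    have h3 : d - (j + 1) + k = d - i + (i - 1 - j) + k := by omega
    rw [h3]
  rw [hL, key]
  have h4 : d + 1 - i = d - i + 1 := by omega
  rw [h4]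
end

section
/- Let d ≥ 1, ξ ∈ (0,1], and let u = (u_1,...,u_d) be a point of the unit simplex (u_j ≥ 0, Σ u_j = 1). Let 0 = u_(0) ≤ u_(1) ≤ ... ≤ u_(d) be the order statistics of (u_1,...,u_d) (with u_(0) := 0). Then (u_1^ξ + ... + u_d^ξ)^{1/ξ} ≥ Σ_{j=1}^{d} (d + 1 - j)^{1/ξ} · (u_(j) - u_(j-1)). -/
/-!
Write the order statistics as sums of their increments, `v j.succ = ∑_{k ≤ j} Δ k`. The vector
`k ↦ Δ k • 𝟙[k ≤ ·]` has `ℓ^ξ` quasi-norm `(d - k)^{1/ξ} Δ k`, and for `0 < ξ ≤ 1` the `ℓ^ξ`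
quasi-norm is superadditive on nonnegative vectors (reverse Minkowski inequality).
-/

open Finset

namespace Real

variable {ι : Type*} (s : Finset ι) {p : ℝ}

theorem Lp_add_Lp_le_Lp_add_of_le_one (hp₀ : 0 < p) (hp₁ : p ≤ 1) {f g : ι → ℝ}
    (hf : ∀ i ∈ s, 0 ≤ f i) (hg : ∀ i ∈ s, 0 ≤ g i) :
    (∑ i ∈ s, f i ^ p) ^ (1 / p) + (∑ i ∈ s, g i ^ p) ^ (1 / p)
      ≤ (∑ i ∈ s, (f i + g i) ^ p) ^ (1 / p) := by
  have hmono {h : ι → ℝ} (hh : ∀ i ∈ s, 0 ≤ h i ∧ h i ≤ f i + g i) :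
      (∑ i ∈ s, h i ^ p) ^ (1 / p) ≤ (∑ i ∈ s, (f i + g i) ^ p) ^ (1 / p) := by
    gcongr with i hi
    · exact sum_nonneg fun i hi => rpow_nonneg (hh i hi).1 p
    · exact (hh i hi).1
    · exact (hh i hi).2
  have hpow {h : ι → ℝ} (hh : ∀ i ∈ s, 0 ≤ h i) :
      ((∑ i ∈ s, h i ^ p) ^ (1 / p)) ^ p = ∑ i ∈ s, h i ^ p := by
    rw [one_div, rpow_inv_rpow (sum_nonneg fun i hi => rpow_nonneg (hh i hi) p) hp₀.ne']
  set a := (∑ i ∈ s, f i ^ p) ^ (1 / p)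
  set b := (∑ i ∈ s, g i ^ p) ^ (1 / p)
  have ha : 0 ≤ a := rpow_nonneg (sum_nonneg fun i hi => rpow_nonneg (hf i hi) p) _
  have hb : 0 ≤ b := rpow_nonneg (sum_nonneg fun i hi => rpow_nonneg (hg i hi) p) _
  obtain ha | ha := ha.eq_or_lt
  · rw [← ha, zero_add]
    exact hmono fun i hi => ⟨hg i hi, le_add_of_nonneg_left (hf i hi)⟩
  obtain hb | hb := hb.eq_or_lt
  · rw [← hb, add_zero]
    exact hmono fun i hi => ⟨hf i hi, le_add_of_nonneg_right (hg i hi)⟩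
  have hab : 0 < a + b := add_pos ha hb
  -- concavity of `x ↦ x ^ p` at the convex combination `(f + g) / (a + b)` of `f / a` and `g / b`
  have hconc : ∀ i ∈ s, a / (a + b) * (f i ^ p / a ^ p) + b / (a + b) * (g i ^ p / b ^ p)
      ≤ (f i + g i) ^ p / (a + b) ^ p := by
    intro i hi
    have := (concaveOn_rpow hp₀.le hp₁).2 (Set.mem_Ici.2 (div_nonneg (hf i hi) ha.le))
      (Set.mem_Ici.2 (div_nonneg (hg i hi) hb.le)) (div_nonneg ha.le hab.le)
      (div_nonneg hb.le hab.le) (by field_simp)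
    simp only [smul_eq_mul, div_rpow (hf i hi) ha.le, div_rpow (hg i hi) hb.le] at this
    rw [← div_rpow (add_nonneg (hf i hi) (hg i hi)) hab.le]
    refine this.trans_eq (congrArg (· ^ p) ?_)
    field_simp
  have key : (a + b) ^ p ≤ ∑ i ∈ s, (f i + g i) ^ p := by
    have := sum_le_sum hconc
    rw [sum_add_distrib, ← mul_sum, ← mul_sum, ← sum_div, ← sum_div, ← sum_div, ← hpow hf,
      ← hpow hg, div_self (by positivity), div_self (by positivity), mul_one, mul_one,
      ← add_div, div_self hab.ne', le_div_iff₀ (by positivity), one_mul] at this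
    exact this
  calc a + b = ((a + b) ^ p) ^ (1 / p) := by
        rw [← rpow_mul hab.le, mul_one_div_cancel hp₀.ne', rpow_one]
    _ ≤ _ := by gcongr

theorem sum_Lp_le_Lp_sum_of_le_one (hp₀ : 0 < p) (hp₁ : p ≤ 1) {κ : Type*} (t : Finset κ)
    {F : κ → ι → ℝ} (hF : ∀ k ∈ t, ∀ i ∈ s, 0 ≤ F k i) :
    ∑ k ∈ t, (∑ i ∈ s, F k i ^ p) ^ (1 / p) ≤ (∑ i ∈ s, (∑ k ∈ t, F k i) ^ p) ^ (1 / p) := by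
  classical
  induction t using Finset.induction_on with
  | empty =>
    rw [sum_empty]
    exact rpow_nonneg (sum_nonneg fun _ _ => rpow_nonneg (by simp) p) _
  | insert a t ha ih =>
    have hF' : ∀ k ∈ t, ∀ i ∈ s, 0 ≤ F k i := fun k hk => hF k (mem_insert_of_mem hk)
    simp only [sum_insert ha]
    calc (∑ i ∈ s, F a i ^ p) ^ (1 / p) + ∑ k ∈ t, (∑ i ∈ s, F k i ^ p) ^ (1 / p)
        ≤ (∑ i ∈ s, F a i ^ p) ^ (1 / p) + (∑ i ∈ s, (∑ k ∈ t, F k i) ^ p) ^ (1 / p) :=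
          add_le_add_right (ih hF') _
      _ ≤ _ := Lp_add_Lp_le_Lp_add_of_le_one s hp₀ hp₁ (hF a (mem_insert_self a t))
          fun i hi => sum_nonneg fun k hk => hF' k hk i hi

end Real

/-- `v` encodes the order statistics: `v 0 = 0`, `v` is monotone, and `(v 1, …, v d)` is a
permutation of `(u 1, …, u d)`. -/
theorem simplex_order_statistics_lower_bound_general (d : ℕ)
    (ξ : ℝ) (hξ0 : 0 < ξ) (hξ1 : ξ ≤ 1)
    (u : Fin d → ℝ)
    (v : Fin (d + 1) → ℝ) (hv0 : v 0 = 0) (hvmono : Monotone v)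
    (σ : Equiv.Perm (Fin d)) (hσ : ∀ j : Fin d, v j.succ = u (σ j)) :
    (∑ j, (u j) ^ ξ) ^ (1 / ξ)
      ≥ ∑ j : Fin d, ((d - (j : ℕ) : ℕ) : ℝ) ^ (1 / ξ) * (v j.succ - v j.castSucc) := by
  set Δ : Fin d → ℝ := fun k => v k.succ - v k.castSucc
  have hΔ : ∀ k, 0 ≤ Δ k := fun k => sub_nonneg.2 (hvmono (Fin.castSucc_le_succ k))
  set F : Fin d → Fin d → ℝ := fun k j => if k ≤ j then Δ k else 0
  have hF : ∀ k j, 0 ≤ F k j := fun k j => by dsimp only [F]; split_ifs <;> simp [hΔ]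
  have hcol : ∀ j, ∑ k, F k j = v j.succ := fun j => by
    rw [← sum_filter, filter_ge_eq_Iic, Fin.sum_Iic_sub, hv0, sub_zero]
  have hrow : ∀ k, (∑ j, F k j ^ ξ) ^ (1 / ξ) = ((d - (k : ℕ) : ℕ) : ℝ) ^ (1 / ξ) * Δ k := by
    intro k
    have hsum : ∑ j, F k j ^ ξ = ((d - (k : ℕ) : ℕ) : ℝ) * Δ k ^ ξ := by
      simp only [F, apply_ite (· ^ ξ), Real.zero_rpow hξ0.ne', ← sum_filter, filter_le_eq_Ici,
        sum_const, Fin.card_Ici, nsmul_eq_mul]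
    rw [hsum, Real.mul_rpow (Nat.cast_nonneg _) (Real.rpow_nonneg (hΔ k) ξ),
      ← Real.rpow_mul (hΔ k), mul_one_div_cancel hξ0.ne', Real.rpow_one]
  have hperm : ∑ j : Fin d, v j.succ ^ ξ = ∑ j, u j ^ ξ := by
    simp only [hσ]
    exact Equiv.sum_comp σ (fun i => u i ^ ξ)
  rw [ge_iff_le]
  calc ∑ j : Fin d, ((d - (j : ℕ) : ℕ) : ℝ) ^ (1 / ξ) * Δ j
      = ∑ k, (∑ j, F k j ^ ξ) ^ (1 / ξ) := by simp only [hrow]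
    _ ≤ (∑ j, (∑ k, F k j) ^ ξ) ^ (1 / ξ) :=
      Real.sum_Lp_le_Lp_sum_of_le_one _ hξ0 hξ1 _ fun k _ j _ => hF k j
    _ = (∑ j, u j ^ ξ) ^ (1 / ξ) := by simp only [hcol, hperm]

/-- Primal feasibility inequality (A.8): for `u` in the unit simplex and
`0 = u_(0) ≤ u_(1) ≤ ⋯ ≤ u_(d)` the order statistics of `u`,
`(Σ_j u_j^ξ)^{1/ξ} ≥ Σ_{j=1}^d (d+1-j)^{1/ξ} (u_(j) - u_(j-1))`.
Here `v : Fin (d+1) → ℝ` encodes the order statistics: `v 0 = 0`, `v` is monotone,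
and `(v 1, …, v d)` is a permutation of `(u 1, …, u d)`. -/
theorem simplex_order_statistics_lower_bound (d : ℕ) (hd : 1 ≤ d)
    (ξ : ℝ) (hξ0 : 0 < ξ) (hξ1 : ξ ≤ 1)
    (u : Fin d → ℝ) (hu0 : ∀ j, 0 ≤ u j) (hu1 : ∑ j, u j = 1)
    (v : Fin (d + 1) → ℝ) (hv0 : v 0 = 0) (hvmono : Monotone v)
    (σ : Equiv.Perm (Fin d)) (hσ : ∀ j : Fin d, v j.succ = u (σ j)) :
    (∑ j, (u j) ^ ξ) ^ (1 / ξ)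
      ≥ ∑ j : Fin d, ((d - (j : ℕ) : ℕ) : ℝ) ^ (1 / ξ) * (v j.succ - v j.castSucc) :=
  simplex_order_statistics_lower_bound_general d ξ hξ0 hξ1 u v hv0 hvmono σ hσ
end

section
/- Let 0 < ξ ≤ 1, d ≥ 1, and let w_1,...,w_d be positive reals. Let H be a finite nonnegative Borel measure on the unit simplex S₊ = {u ∈ ℝ^d : u_j ≥ 0, Σ u_j = 1} satisfying ∫ u_j dH(u) = 1 for each j = 1,...,d. Define ρ_w(H) := ∫ (w_1 u_1^ξ + ... + w_d u_d^ξ)^{1/ξ} dH(u). Then Σ_{i=1}^{d} w_i^{1/ξ} ≤ ρ_w(H) ≤ (Σ_{i=1}^{d} w_i)^{1/ξ}. -/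
/-!
Put `p = 1 / ξ ≥ 1`. Superadditivity of `x ↦ x ^ p` on `[0, ∞)` gives
`(∑ wᵢ uᵢ^ξ)^p ≥ ∑ (wᵢ uᵢ^ξ)^p = ∑ wᵢ^p uᵢ`, while the weighted Hölder (Jensen) inequality gives
`(∑ wᵢ uᵢ^ξ)^p ≤ (∑ wᵢ)^(p - 1) ∑ wᵢ uᵢ`. Both bounds are linear in `u`, so integrating them
against `H` and using `∫ uⱼ dH = 1` yields `∑ wᵢ^p ≤ ρ_w(H) ≤ (∑ wᵢ)^(p - 1) ∑ wᵢ = (∑ wᵢ)^p`.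
-/

open MeasureTheory

namespace Real

variable {ι : Type*}

theorem sum_rpow_le_rpow_sum (s : Finset ι) {f : ι → ℝ} (hf : ∀ i ∈ s, 0 ≤ f i) {p : ℝ}
    (hp : 1 ≤ p) : ∑ i ∈ s, f i ^ p ≤ (∑ i ∈ s, f i) ^ p := by
  have hp' : 1 + (p - 1) ≠ 0 := by linarith
  have hsum : 0 ≤ ∑ i ∈ s, f i := Finset.sum_nonneg hf
  calc ∑ i ∈ s, f i ^ p = ∑ i ∈ s, f i * f i ^ (p - 1) := by
        refine Finset.sum_congr rfl fun i hi => ?_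
        rw [← rpow_one_add' (hf i hi) hp', add_sub_cancel]
    _ ≤ ∑ i ∈ s, f i * (∑ j ∈ s, f j) ^ (p - 1) := by
        refine Finset.sum_le_sum fun i hi => mul_le_mul_of_nonneg_left ?_ (hf i hi)
        exact rpow_le_rpow (hf i hi) (Finset.single_le_sum hf hi) (by linarith)
    _ = (∑ i ∈ s, f i) ^ p := by
        rw [← Finset.sum_mul, ← rpow_one_add' hsum hp', add_sub_cancel]

variable [Fintype ι] {w u : ι → ℝ} {ξ : ℝ}

theorem sum_rpow_inv_mul_le_rpow_inv_sum_mul_rpow (hw : ∀ i, 0 ≤ w i) (hu : ∀ i, 0 ≤ u i)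
    (hξ0 : 0 < ξ) (hξ1 : ξ ≤ 1) :
    ∑ i, w i ^ (1 / ξ) * u i ≤ (∑ i, w i * u i ^ ξ) ^ (1 / ξ) := by
  have hp : 1 ≤ 1 / ξ := by rw [le_div_iff₀ hξ0]; linarith
  calc ∑ i, w i ^ (1 / ξ) * u i = ∑ i, (w i * u i ^ ξ) ^ (1 / ξ) := by
        refine Finset.sum_congr rfl fun i _ => ?_
        rw [mul_rpow (hw i) (rpow_nonneg (hu i) ξ), one_div, rpow_rpow_inv (hu i) hξ0.ne']
    _ ≤ (∑ i, w i * u i ^ ξ) ^ (1 / ξ) :=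
        sum_rpow_le_rpow_sum _ (fun i _ => mul_nonneg (hw i) (rpow_nonneg (hu i) ξ)) hp

theorem rpow_inv_sum_mul_rpow_le (hw : ∀ i, 0 ≤ w i) (hu : ∀ i, 0 ≤ u i)
    (hξ0 : 0 < ξ) (hξ1 : ξ ≤ 1) :
    (∑ i, w i * u i ^ ξ) ^ (1 / ξ) ≤ (∑ i, w i) ^ (1 / ξ - 1) * ∑ i, w i * u i := by
  have hp : 1 ≤ 1 / ξ := by rw [le_div_iff₀ hξ0]; linarith
  have hS : 0 ≤ ∑ i, w i := Finset.sum_nonneg fun i _ => hw i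
  have hwu : 0 ≤ ∑ i, w i * u i := Finset.sum_nonneg fun i _ => mul_nonneg (hw i) (hu i)
  have holder : ∑ i, w i * u i ^ ξ ≤ (∑ i, w i) ^ (1 - ξ) * (∑ i, w i * u i) ^ ξ := by
    simpa [rpow_rpow_inv (hu _) hξ0.ne'] using
      inner_le_weight_mul_Lp_of_nonneg Finset.univ hp w (fun i => u i ^ ξ) hw
        (fun i => rpow_nonneg (hu i) ξ)
  calc (∑ i, w i * u i ^ ξ) ^ (1 / ξ)
      ≤ ((∑ i, w i) ^ (1 - ξ) * (∑ i, w i * u i) ^ ξ) ^ (1 / ξ) :=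
        rpow_le_rpow (Finset.sum_nonneg fun i _ => mul_nonneg (hw i) (rpow_nonneg (hu i) ξ))
          holder (by positivity)
    _ = (∑ i, w i) ^ (1 / ξ - 1) * ∑ i, w i * u i := by
        rw [mul_rpow (rpow_nonneg hS _) (rpow_nonneg hwu _), ← rpow_mul hS, ← rpow_mul hwu,
          mul_one_div_cancel hξ0.ne', rpow_one]
        congr 2
        field_simp

end Real

section UnitMarginals

variable {ι : Type*} {μ : Measure (ι → ℝ)}

theorem integrable_apply_of_integral_eq_one (hmarg : ∀ i, ∫ u, u i ∂μ = 1) (i : ι) :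
    Integrable (fun u : ι → ℝ => u i) μ :=
  .of_integral_ne_zero (by simp [hmarg])

theorem integrable_sum_mul_apply [Fintype ι] (hmarg : ∀ i, ∫ u, u i ∂μ = 1) (c : ι → ℝ) :
    Integrable (fun u : ι → ℝ => ∑ i, c i * u i) μ :=
  integrable_finsetSum _ fun i _ => (integrable_apply_of_integral_eq_one hmarg i).const_mul (c i)

theorem integral_sum_mul_apply [Fintype ι] (hmarg : ∀ i, ∫ u, u i ∂μ = 1) (c : ι → ℝ) :
    ∫ u, ∑ i, c i * u i ∂μ = ∑ i, c i := by
  rw [integral_finsetSum _ fun i _ =>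
    (integrable_apply_of_integral_eq_one hmarg i).const_mul (c i)]
  simp only [integral_const_mul, hmarg, mul_one]

theorem integrable_rpow_inv_sum_mul_rpow [Fintype ι] (hmarg : ∀ i, ∫ u, u i ∂μ = 1)
    (hnonneg : ∀ᵐ u ∂μ, ∀ i, 0 ≤ u i) {w : ι → ℝ} (hw : ∀ i, 0 ≤ w i) {ξ : ℝ} (hξ0 : 0 < ξ)
    (hξ1 : ξ ≤ 1) : Integrable (fun u : ι → ℝ => (∑ i, w i * u i ^ ξ) ^ (1 / ξ)) μ := by
  refine ((integrable_sum_mul_apply hmarg w).const_mul ((∑ i, w i) ^ (1 / ξ - 1))).mono'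
    (Measurable.pow_const (by fun_prop) _).aestronglyMeasurable ?_
  filter_upwards [hnonneg] with u hu
  rw [Real.norm_of_nonneg <| Real.rpow_nonneg
    (Finset.sum_nonneg fun i _ => mul_nonneg (hw i) (Real.rpow_nonneg (hu i) ξ)) _]
  exact Real.rpow_inv_sum_mul_rpow_le hw hu hξ0 hξ1

end UnitMarginals

theorem frechet_bounds_rho_general (d : ℕ) (ξ : ℝ) (hξ0 : 0 < ξ) (hξ1 : ξ ≤ 1)
    (w : Fin d → ℝ) (hw : ∀ i, 0 < w i)
    (H : Measure (Fin d → ℝ))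
    (hsupp : H {u | ¬ ((∀ j, 0 ≤ u j) ∧ ∑ j, u j = 1)} = 0)
    (hmarg : ∀ j, ∫ u, u j ∂H = 1) :
    ∑ i, (w i) ^ (1 / ξ) ≤ ∫ u, (∑ i, w i * (u i) ^ ξ) ^ (1 / ξ) ∂H ∧
    ∫ u, (∑ i, w i * (u i) ^ ξ) ^ (1 / ξ) ∂H ≤ (∑ i, w i) ^ (1 / ξ) := by
  have hw0 : ∀ i, 0 ≤ w i := fun i => (hw i).le
  have hnonneg : ∀ᵐ u ∂H, ∀ j, 0 ≤ u j := (ae_iff.2 hsupp).mono fun u hu => hu.1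
  have hint := integrable_rpow_inv_sum_mul_rpow hmarg hnonneg hw0 hξ0 hξ1
  constructor
  · calc ∑ i, w i ^ (1 / ξ) = ∫ u, ∑ i, w i ^ (1 / ξ) * u i ∂H :=
          (integral_sum_mul_apply hmarg _).symm
      _ ≤ _ := integral_mono_ae (integrable_sum_mul_apply hmarg _) hint <|
          hnonneg.mono fun u hu => Real.sum_rpow_inv_mul_le_rpow_inv_sum_mul_rpow hw0 hu hξ0 hξ1
  · calc _ ≤ ∫ u, (∑ i, w i) ^ (1 / ξ - 1) * ∑ i, w i * u i ∂H :=
          integral_mono_ae hint ((integrable_sum_mul_apply hmarg w).const_mul _) <|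
            hnonneg.mono fun u hu => Real.rpow_inv_sum_mul_rpow_le hw0 hu hξ0 hξ1
      _ = (∑ i, w i) ^ (1 / ξ - 1) * (∑ i, w i) ^ (1 : ℝ) := by
          rw [integral_const_mul, integral_sum_mul_apply hmarg, Real.rpow_one]
      _ = (∑ i, w i) ^ (1 / ξ) := by
          rw [← Real.rpow_add' (Finset.sum_nonneg fun i _ => hw0 i) (by simp [hξ0.ne']),
            sub_add_cancel]

/-- Hoeffding–Fréchet universal bounds (0 < ξ ≤ 1): for a finite measure `H` on the
unit simplex with unit marginal moments, `Σ w_i^{1/ξ} ≤ ρ_w(H) ≤ (Σ w_i)^{1/ξ}`. -/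
theorem frechet_bounds_rho (d : ℕ) (hd : 1 ≤ d) (ξ : ℝ) (hξ0 : 0 < ξ) (hξ1 : ξ ≤ 1)
    (w : Fin d → ℝ) (hw : ∀ i, 0 < w i)
    (H : Measure (Fin d → ℝ)) [IsFiniteMeasure H]
    (hsupp : H {u | ¬ ((∀ j, 0 ≤ u j) ∧ ∑ j, u j = 1)} = 0)
    (hmarg : ∀ j, ∫ u, u j ∂H = 1) :
    ∑ i, (w i) ^ (1 / ξ) ≤ ∫ u, (∑ i, w i * (u i) ^ ξ) ^ (1 / ξ) ∂H ∧
    ∫ u, (∑ i, w i * (u i) ^ ξ) ^ (1 / ξ) ∂H ≤ (∑ i, w i) ^ (1 / ξ) :=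
  frechet_bounds_rho_general d ξ hξ0 hξ1 w hw H hsupp hmarg
end

section
/- Let ξ > 1, d ≥ 1, and let w_1,...,w_d be positive reals. Let H be a finite nonnegative Borel measure on the unit simplex S₊ ⊂ ℝ^d with ∫ u_j dH(u) = 1 for each j. Then (Σ_{i=1}^d w_i)^{1/ξ} ≤ ∫ (w_1 u_1^ξ + ... + w_d u_d^ξ)^{1/ξ} dH(u) ≤ Σ_{i=1}^d w_i^{1/ξ}. -/
/-!
Both bounds hold pointwise on the nonnegative orthant and are then integrated against `H`, the
marginal constraints turning every linear form `∑ c i * u i` into `∑ c i`. For the upper bound,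
`x ↦ x ^ ξ⁻¹` is subadditive on `[0, ∞)`, so `(∑ w i * u i ^ ξ) ^ ξ⁻¹ ≤ ∑ w i ^ ξ⁻¹ * u i`.
For the lower bound, the weighted Hölder inequality
`∑ w i * u i ≤ (∑ w i) ^ (1 - ξ⁻¹) * (∑ w i * u i ^ ξ) ^ ξ⁻¹` integrates to
`∑ w i ≤ (∑ w i) ^ (1 - ξ⁻¹) * ∫ (∑ w i * u i ^ ξ) ^ ξ⁻¹ ∂H`.
-/

open MeasureTheory

lemma Real.rpow_sum_le_sum_rpow {ι : Type*} (s : Finset ι) {a : ι → ℝ} (ha : ∀ i ∈ s, 0 ≤ a i)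
    {p : ℝ} (hp₀ : 0 < p) (hp₁ : p ≤ 1) :
    (∑ i ∈ s, a i) ^ p ≤ ∑ i ∈ s, a i ^ p :=
  Finset.le_sum_of_subadditive_on_pred (· ^ p) (0 ≤ ·) (Real.zero_rpow hp₀.ne').le
    (fun _ _ hx hy => Real.rpow_add_le_add_rpow hx hy hp₀.le hp₁) (fun _ _ => add_nonneg) a ha

lemma Real.weighted_rpow_sum_rpow_inv_le {ι : Type*} (s : Finset ι) {w u : ι → ℝ}
    (hw : ∀ i, 0 ≤ w i) (hu : ∀ i, 0 ≤ u i) {ξ : ℝ} (hξ : 1 ≤ ξ) :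
    (∑ i ∈ s, w i * u i ^ ξ) ^ ξ⁻¹ ≤ ∑ i ∈ s, w i ^ ξ⁻¹ * u i := by
  have hξ₀ : 0 < ξ := zero_lt_one.trans_le hξ
  calc (∑ i ∈ s, w i * u i ^ ξ) ^ ξ⁻¹ ≤ ∑ i ∈ s, (w i * u i ^ ξ) ^ ξ⁻¹ :=
        Real.rpow_sum_le_sum_rpow s (fun i _ => by have := hw i; have := hu i; positivity)
          (inv_pos.2 hξ₀) (inv_le_one_of_one_le₀ hξ)
    _ = ∑ i ∈ s, w i ^ ξ⁻¹ * u i := by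
        refine Finset.sum_congr rfl fun i _ => ?_
        rw [Real.mul_rpow (hw i) (Real.rpow_nonneg (hu i) _), Real.rpow_rpow_inv (hu i) hξ₀.ne']

lemma integrable_apply_of_integral_apply_eq_one {ι : Type*} {H : Measure (ι → ℝ)}
    (hmarg : ∀ j, ∫ u, u j ∂H = 1) (j : ι) : Integrable (fun u : ι → ℝ => u j) H :=
  .of_integral_ne_zero (by simp [hmarg])

section Marginals

variable {ι : Type*} [Fintype ι] {H : Measure (ι → ℝ)}

lemma integrable_sum_mul_apply_of_integral_apply_eq_one (hmarg : ∀ j, ∫ u, u j ∂H = 1)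
    (c : ι → ℝ) : Integrable (fun u => ∑ i, c i * u i) H :=
  integrable_finsetSum _ fun i _ => (integrable_apply_of_integral_apply_eq_one hmarg i).const_mul _

lemma integral_sum_mul_apply_of_integral_apply_eq_one (hmarg : ∀ j, ∫ u, u j ∂H = 1)
    (c : ι → ℝ) : ∫ u, ∑ i, c i * u i ∂H = ∑ i, c i := by
  rw [integral_finsetSum _ fun i _ =>
    (integrable_apply_of_integral_apply_eq_one hmarg i).const_mul _]
  simp [integral_const_mul, hmarg]

lemma integrable_weighted_rpow_sum_rpow_inv {ξ : ℝ} (hξ : 1 ≤ ξ) {w : ι → ℝ}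
    (hw : ∀ i, 0 ≤ w i) (hpos : ∀ᵐ u ∂H, ∀ j, 0 ≤ u j) (hmarg : ∀ j, ∫ u, u j ∂H = 1) :
    Integrable (fun u => (∑ i, w i * u i ^ ξ) ^ ξ⁻¹) H := by
  refine (integrable_sum_mul_apply_of_integral_apply_eq_one hmarg (w · ^ ξ⁻¹)).mono'
    (Measurable.aestronglyMeasurable (by fun_prop)) ?_
  filter_upwards [hpos] with u hu
  rw [Real.norm_of_nonneg (Real.rpow_nonneg (Finset.sum_nonneg fun i _ => by
    have := hw i; have := hu i; positivity) _)]
  exact Real.weighted_rpow_sum_rpow_inv_le _ hw hu hξ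

lemma integral_weighted_rpow_sum_rpow_inv_le {ξ : ℝ} (hξ : 1 ≤ ξ) {w : ι → ℝ}
    (hw : ∀ i, 0 ≤ w i) (hpos : ∀ᵐ u ∂H, ∀ j, 0 ≤ u j) (hmarg : ∀ j, ∫ u, u j ∂H = 1) :
    ∫ u, (∑ i, w i * u i ^ ξ) ^ ξ⁻¹ ∂H ≤ ∑ i, w i ^ ξ⁻¹ := by
  rw [← integral_sum_mul_apply_of_integral_apply_eq_one hmarg]
  refine integral_mono_ae (integrable_weighted_rpow_sum_rpow_inv hξ hw hpos hmarg)
    (integrable_sum_mul_apply_of_integral_apply_eq_one hmarg _) ?_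
  filter_upwards [hpos] with u hu
  exact Real.weighted_rpow_sum_rpow_inv_le _ hw hu hξ

lemma sum_rpow_inv_le_integral_weighted_rpow_sum_rpow_inv {ξ : ℝ} (hξ : 1 ≤ ξ) {w : ι → ℝ}
    (hw : ∀ i, 0 ≤ w i) (hW : 0 < ∑ i, w i) (hpos : ∀ᵐ u ∂H, ∀ j, 0 ≤ u j)
    (hmarg : ∀ j, ∫ u, u j ∂H = 1) :
    (∑ i, w i) ^ ξ⁻¹ ≤ ∫ u, (∑ i, w i * u i ^ ξ) ^ ξ⁻¹ ∂H := by
  set W := ∑ i, w i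
  have hHolder :
      ∫ u, ∑ i, w i * u i ∂H ≤ ∫ u, W ^ (1 - ξ⁻¹) * (∑ i, w i * u i ^ ξ) ^ ξ⁻¹ ∂H := by
    refine integral_mono_ae (integrable_sum_mul_apply_of_integral_apply_eq_one hmarg w)
      ((integrable_weighted_rpow_sum_rpow_inv hξ hw hpos hmarg).const_mul _) ?_
    filter_upwards [hpos] with u hu
    exact Real.inner_le_weight_mul_Lp_of_nonneg _ hξ w u hw hu
  rw [integral_sum_mul_apply_of_integral_apply_eq_one hmarg, integral_const_mul] at hHolder
  refine le_of_mul_le_mul_left ?_ (Real.rpow_pos_of_pos hW (1 - ξ⁻¹))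
  calc W ^ (1 - ξ⁻¹) * W ^ ξ⁻¹ = W := by rw [← Real.rpow_add hW, sub_add_cancel, Real.rpow_one]
    _ ≤ _ := hHolder

end Marginals

theorem frechet_bounds_rho_reversed_general (d : ℕ) (hd : 1 ≤ d) (ξ : ℝ) (hξ : 1 < ξ)
    (w : Fin d → ℝ) (hw : ∀ i, 0 < w i)
    (H : Measure (Fin d → ℝ))
    (hsupp : H {u | ¬ ((∀ j, 0 ≤ u j) ∧ ∑ j, u j = 1)} = 0)
    (hmarg : ∀ j, ∫ u, u j ∂H = 1) :
    (∑ i, w i) ^ (1 / ξ) ≤ ∫ u, (∑ i, w i * (u i) ^ ξ) ^ (1 / ξ) ∂H ∧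
    ∫ u, (∑ i, w i * (u i) ^ ξ) ^ (1 / ξ) ∂H ≤ ∑ i, (w i) ^ (1 / ξ) := by
  have hpos : ∀ᵐ u ∂H, ∀ j, 0 ≤ u j := (ae_iff.2 hsupp).mono fun _ hu => hu.1
  have hw₀ (i : Fin d) : 0 ≤ w i := (hw i).le
  have hW : 0 < ∑ i, w i := Finset.sum_pos (fun i _ => hw i) ⟨⟨0, hd⟩, Finset.mem_univ _⟩
  simp only [one_div]
  exact ⟨sum_rpow_inv_le_integral_weighted_rpow_sum_rpow_inv hξ.le hw₀ hW hpos hmarg,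
    integral_weighted_rpow_sum_rpow_inv_le hξ.le hw₀ hpos hmarg⟩

/-- Reversed (anti-diversification) Fréchet bounds for ξ > 1:
`(Σ w_i)^{1/ξ} ≤ ρ_w(H) ≤ Σ w_i^{1/ξ}`. -/
theorem frechet_bounds_rho_reversed (d : ℕ) (hd : 1 ≤ d) (ξ : ℝ) (hξ : 1 < ξ)
    (w : Fin d → ℝ) (hw : ∀ i, 0 < w i)
    (H : Measure (Fin d → ℝ)) [IsFiniteMeasure H]
    (hsupp : H {u | ¬ ((∀ j, 0 ≤ u j) ∧ ∑ j, u j = 1)} = 0)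
    (hmarg : ∀ j, ∫ u, u j ∂H = 1) :
    (∑ i, w i) ^ (1 / ξ) ≤ ∫ u, (∑ i, w i * (u i) ^ ξ) ^ (1 / ξ) ∂H ∧
    ∫ u, (∑ i, w i * (u i) ^ ξ) ^ (1 / ξ) ∂H ≤ ∑ i, (w i) ^ (1 / ξ) :=
  frechet_bounds_rho_reversed_general d hd ξ hξ w hw H hsupp hmarg
end

section
/- Let 0 < ξ < 1, d ≥ 2, and z ∈ [1, d]. Then the maximum of (u_1^ξ + ... + u_d^ξ)^{1/ξ} over all u in the unit simplex S₊ ⊂ ℝ^d subject to d·max_{j} u_j = z equals (1/d)·(z^ξ + (d-1)^{1-ξ}·(d-z)^ξ)^{1/ξ}, attained at the point with one coordinate equal to z/d and the remaining d-1 coordinates equal to (d-z)/(d(d-1)). -/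
/-!
The largest coordinate is pinned to `z / d`, so the other `d - 1` coordinates sum to `1 - z / d`.
By Jensen's inequality for the concave map `t ↦ t ^ ξ`, their contribution to `∑ u_j ^ ξ` is
largest when they are all equal to `(d - z) / (d (d - 1))`; since `z ≥ 1` this common value does
not exceed `z / d`, so that point satisfies the constraint and attains the bound.
-/

open Finset

theorem Finset.sum_rpow_le_card_mul_rpow_mean {ι : Type*} (s : Finset ι) {u : ι → ℝ}
    (hu : ∀ i ∈ s, 0 ≤ u i) {ξ : ℝ} (hξ0 : 0 ≤ ξ) (hξ1 : ξ ≤ 1) :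
    ∑ i ∈ s, u i ^ ξ ≤ #s * ((∑ i ∈ s, u i) / #s) ^ ξ := by
  rcases s.eq_empty_or_nonempty with rfl | hs
  · simp
  have hcard : (0 : ℝ) < #s := by exact_mod_cast hs.card_pos
  have jensen := (Real.concaveOn_rpow hξ0 hξ1).le_map_sum (t := s) (w := fun _ => (#s : ℝ)⁻¹)
    (p := u) (fun _ _ => by positivity) (by simp [hcard.ne']) hu
  simp only [smul_eq_mul, ← mul_sum] at jensen
  rwa [inv_mul_le_iff₀ hcard, ← div_eq_inv_mul] at jensen

theorem Fin.sum_ite_val_eq_zero {d : ℕ} [NeZero d] (p q : ℝ) :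
    ∑ j : Fin d, (if (j : ℕ) = 0 then p else q) = p + ((d : ℝ) - 1) * q := by
  obtain ⟨n, rfl⟩ := Nat.exists_eq_succ_of_ne_zero (NeZero.ne d)
  simp [Fin.sum_univ_succ]

theorem Fin.iSup_ite_val_eq_zero {d : ℕ} [NeZero d] {p q : ℝ} (hqp : q ≤ p) :
    ⨆ j : Fin d, (if (j : ℕ) = 0 then p else q) = p := by
  refine le_antisymm (ciSup_le fun j => ?_) ?_
  · split_ifs <;> [exact le_rfl; exact hqp]
  · simpa using le_ciSup (Finite.bddAbove_range fun j : Fin d => if (j : ℕ) = 0 then p else q) 0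

theorem Fin.sum_rpow_le_iSup_rpow_add {d : ℕ} [NeZero d] {u : Fin d → ℝ} (hu0 : ∀ j, 0 ≤ u j)
    (hu1 : ∑ j, u j = 1) {ξ : ℝ} (hξ0 : 0 ≤ ξ) (hξ1 : ξ ≤ 1) :
    ∑ j, u j ^ ξ ≤ (⨆ j, u j) ^ ξ + ((d : ℝ) - 1) * ((1 - ⨆ j, u j) / ((d : ℝ) - 1)) ^ ξ := by
  obtain ⟨j₀, hj₀⟩ := Finite.exists_max u
  have hsup : ⨆ j, u j = u j₀ := le_antisymm (ciSup_le hj₀) (le_ciSup (Finite.bddAbove_range u) j₀)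
  have hrest : ∑ j ∈ univ.erase j₀, u j = 1 - u j₀ := by
    rw [← hu1, ← add_sum_erase _ _ (mem_univ j₀)]
    ring
  have hcard : (#(univ.erase j₀) : ℝ) = d - 1 := by
    rw [card_erase_of_mem (mem_univ _), card_univ, Fintype.card_fin, Nat.cast_sub NeZero.one_le,
      Nat.cast_one]
  calc ∑ j, u j ^ ξ = u j₀ ^ ξ + ∑ j ∈ univ.erase j₀, u j ^ ξ :=
        (add_sum_erase _ _ (mem_univ j₀)).symm
    _ ≤ u j₀ ^ ξ + #(univ.erase j₀) * ((∑ j ∈ univ.erase j₀, u j) / #(univ.erase j₀)) ^ ξ := by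
      gcongr
      exact sum_rpow_le_card_mul_rpow_mean _ (fun j _ => hu0 j) hξ0 hξ1
    _ = _ := by rw [hsup, hrest, hcard]

theorem rpow_add_mul_rpow_eq {D z ξ : ℝ} (hD : 1 < D) (hz0 : 0 ≤ z) (hzD : z ≤ D) (hξ : 0 < ξ) :
    ((z / D) ^ ξ + (D - 1) * ((D - z) / (D * (D - 1))) ^ ξ) ^ (1 / ξ)
      = 1 / D * (z ^ ξ + (D - 1) ^ (1 - ξ) * (D - z) ^ ξ) ^ (1 / ξ) := by
  have hD0 : 0 < D := by linarith
  have hD1 : 0 < D - 1 := by linarith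
  have hsum : (z / D) ^ ξ + (D - 1) * ((D - z) / (D * (D - 1))) ^ ξ
      = (z ^ ξ + (D - 1) ^ (1 - ξ) * (D - z) ^ ξ) / D ^ ξ := by
    rw [Real.div_rpow hz0 hD0.le, Real.div_rpow (by linarith) (by positivity),
      Real.mul_rpow hD0.le hD1.le, Real.rpow_sub hD1, Real.rpow_one]
    field_simp
  rw [hsum, Real.div_rpow (by positivity) (by positivity), ← Real.rpow_mul hD0.le,
    mul_one_div_cancel hξ.ne', Real.rpow_one, one_div_mul_eq_div]

/-- The inner optimization `U(z)` of Theorem 3.6: for `0 < ξ < 1`, `d ≥ 2` and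
`z ∈ [1,d]`, the maximum of `(Σ_j u_j^ξ)^{1/ξ}` over the unit simplex subject to
`d·max_j u_j = z` equals `(1/d)(z^ξ + (d-1)^{1-ξ}(d-z)^ξ)^{1/ξ}`, attained at the
point with one coordinate `z/d` and the other `d-1` coordinates `(d-z)/(d(d-1))`. -/
theorem inner_optimization_U (d : ℕ) (hd : 2 ≤ d) (ξ : ℝ) (hξ0 : 0 < ξ) (hξ1 : ξ < 1)
    (z : ℝ) (hz : z ∈ Set.Icc (1 : ℝ) d) :
    IsGreatest
      { y : ℝ | ∃ u : Fin d → ℝ, (∀ j, 0 ≤ u j) ∧ (∑ j, u j = 1) ∧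
          (d : ℝ) * (⨆ j, u j) = z ∧ y = (∑ j, (u j) ^ ξ) ^ (1 / ξ) }
      ((1 / d) * (z ^ ξ + ((d : ℝ) - 1) ^ (1 - ξ) * ((d : ℝ) - z) ^ ξ) ^ (1 / ξ)) ∧
    (∀ j : Fin d, 0 ≤ (fun j : Fin d => if (j : ℕ) = 0 then z / d else ((d : ℝ) - z) / (d * ((d : ℝ) - 1))) j) ∧
    (∑ j : Fin d, (if (j : ℕ) = 0 then z / d else ((d : ℝ) - z) / (d * ((d : ℝ) - 1))) = 1) ∧
    ((d : ℝ) * (⨆ j : Fin d, (if (j : ℕ) = 0 then z / d else ((d : ℝ) - z) / (d * ((d : ℝ) - 1)))) = z) ∧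
    ((∑ j : Fin d, (if (j : ℕ) = 0 then z / d else ((d : ℝ) - z) / (d * ((d : ℝ) - 1))) ^ ξ) ^ (1 / ξ)
        = (1 / d) * (z ^ ξ + ((d : ℝ) - 1) ^ (1 - ξ) * ((d : ℝ) - z) ^ ξ) ^ (1 / ξ)) := by
  have : NeZero d := ⟨by omega⟩
  obtain ⟨hz1, hzd⟩ := hz
  have hD : (1 : ℝ) < d := by exact_mod_cast hd
  set a : ℝ := z / d with ha
  set b : ℝ := ((d : ℝ) - z) / (d * ((d : ℝ) - 1)) with hb
  have hb_eq : (1 - a) / ((d : ℝ) - 1) = b := by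
    rw [ha, hb]
    field_simp
  have had : a * d = z := div_mul_cancel₀ z (by positivity)
  have hba : b ≤ a := by
    rw [← hb_eq, div_le_iff₀ (by linarith)]
    linarith
  have hnn : ∀ j : Fin d, 0 ≤ if (j : ℕ) = 0 then a else b := fun j => by
    split_ifs <;> positivity
  have hsum : ∑ j : Fin d, (if (j : ℕ) = 0 then a else b) = 1 := by
    rw [Fin.sum_ite_val_eq_zero, ← hb_eq, mul_div_cancel₀ _ (by linarith)]
    ring
  have hsup : (d : ℝ) * ⨆ j : Fin d, (if (j : ℕ) = 0 then a else b) = z := by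
    rw [Fin.iSup_ite_val_eq_zero hba, mul_comm, had]
  have hval : (∑ j : Fin d, (if (j : ℕ) = 0 then a else b) ^ ξ) ^ (1 / ξ)
      = 1 / d * (z ^ ξ + ((d : ℝ) - 1) ^ (1 - ξ) * ((d : ℝ) - z) ^ ξ) ^ (1 / ξ) := by
    simp_rw [apply_ite (· ^ ξ)]
    rw [Fin.sum_ite_val_eq_zero, rpow_add_mul_rpow_eq hD (by linarith) hzd hξ0]
  refine ⟨⟨⟨_, hnn, hsum, hsup, hval.symm⟩, ?_⟩, hnn, hsum, hsup, hval⟩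
  rintro _ ⟨u, hu0, hu1, husup, rfl⟩
  have hmax : ⨆ j, u j = a := by
    rw [ha, eq_div_iff (by positivity), mul_comm, husup]
  calc (∑ j, u j ^ ξ) ^ (1 / ξ) ≤ (a ^ ξ + ((d : ℝ) - 1) * b ^ ξ) ^ (1 / ξ) := by
        gcongr
        · exact sum_nonneg fun j _ => Real.rpow_nonneg (hu0 j) ξ
        · simpa only [hmax, hb_eq] using Fin.sum_rpow_le_iSup_rpow_add hu0 hu1 hξ0.le hξ1.le
    _ = _ := rpow_add_mul_rpow_eq hD (by linarith) hzd hξ0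
end

section
/- Let d ≥ 2, 0 < ξ ≤ 1, and ϑ ∈ [1, d]. Among all finite nonnegative Borel measures H on the unit simplex S₊ ⊂ ℝ^d satisfying ∫ u_j dH = 1 for each j and ∫ max_j u_j dH = ϑ, the supremum of ∫ (Σ_{j=1}^d u_j^ξ)^{1/ξ} dH(u) equals U(ϑ) := (ϑ^ξ + (d-1)^{1-ξ}·(d-ϑ)^ξ)^{1/ξ}, and it is attained by the discrete measure H = Σ_{k=1}^d δ_{u_k}, where u_k has k-th coordinate ϑ/d and all other coordinates (d-ϑ)/(d(d-1)). -/
/-!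
For `ξ ≤ 1` the map `pNorm ξ : u ↦ (∑ j, u j ^ ξ) ^ (1 / ξ)` is concave and homogeneous on the
nonnegative orthant, and Hölder's inequality with exponent `1 / ξ` gives its tangent inequality at
any positive point `v`. Take for `v` the point `u_k = spike k a b` of the extremal measure, with
`a = ϑ / d`, `b = (d - ϑ) / (d (d - 1))` and `k` a maximal coordinate of `u`: the tangent is then
`c₁ · max_j u_j + c₂ · ∑_j u_j`, whose integral against `H` is fixed by the constraints and equals
`d · pNorm ξ u_k`, the integral against the extremal measure `∑_k δ_{u_k}`, which is `U(ϑ)`.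
When `ϑ = d` (so `b = 0`) there is no such tangent; instead `∫ (∑_j u_j - max_j u_j) dH = 0` forces
`H` onto the vertices of the simplex, where the integrand is `1`.
-/

open MeasureTheory Real Finset

noncomputable def pNorm {ι : Type*} [Fintype ι] (ξ : ℝ) (u : ι → ℝ) : ℝ :=
  (∑ j, u j ^ ξ) ^ (1 / ξ)

def spike {ι : Type*} [DecidableEq ι] (k : ι) (a b : ℝ) : ι → ℝ :=
  fun j => if j = k then a else b

section Spike

variable {ι : Type*} [DecidableEq ι] {k j : ι} {a b : ℝ}

theorem spike_rpow (r : ℝ) : spike k a b j ^ r = spike k (a ^ r) (b ^ r) j :=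
  apply_ite (· ^ r) _ _ _

theorem spike_comm : spike k a b j = spike j a b k := by
  simp only [spike, eq_comm]

theorem spike_pos (ha : 0 < a) (hb : 0 < b) : 0 < spike k a b j := by
  unfold spike; split_ifs <;> assumption

variable [Fintype ι]

theorem sum_mul_spike (u : ι → ℝ) (k : ι) (a b : ℝ) :
    ∑ j, u j * spike k a b j = a * u k + b * (∑ j, u j - u k) := by
  rw [← add_sum_erase _ _ (mem_univ k), ← add_sum_erase _ _ (mem_univ k), add_sub_cancel_left,
    mul_sum, sum_congr rfl fun j hj => by rw [spike, if_neg (ne_of_mem_erase hj)]]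
  simp only [spike, if_pos, mul_comm]

theorem sum_spike (k : ι) (a b : ℝ) : ∑ j, spike k a b j = a + (Fintype.card ι - 1) * b := by
  simpa [sum_const, card_univ, mul_comm b] using sum_mul_spike (fun _ => (1 : ℝ)) k a b

theorem spike_mem_stdSimplex (ha : 0 ≤ a) (hb : 0 ≤ b)
    (hab : a + (Fintype.card ι - 1) * b = 1) : spike k a b ∈ stdSimplex ℝ ι :=
  ⟨fun j => by unfold spike; split_ifs <;> assumption, by rw [sum_spike, hab]⟩

theorem iSup_spike (hba : b ≤ a) : ⨆ j, spike k a b j = a :=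
  have : Nonempty ι := ⟨k⟩
  le_antisymm (ciSup_le fun j => by unfold spike; split_ifs <;> simp [hba])
    ((if_pos rfl).symm.trans_le (le_ciSup (Set.finite_range (spike k a b)).bddAbove k))

theorem pNorm_spike (ξ : ℝ) (k : ι) (a b : ℝ) :
    pNorm ξ (spike k a b) = (a ^ ξ + (Fintype.card ι - 1) * b ^ ξ) ^ (1 / ξ) := by
  simp only [pNorm, spike_rpow, sum_spike]

end Spike

section PNorm

variable {ι : Type*} [Fintype ι] {ξ : ℝ} {u v : ι → ℝ}

theorem pNorm_rpow (hξ : ξ ≠ 0) (hu : ∀ j, 0 ≤ u j) : pNorm ξ u ^ ξ = ∑ j, u j ^ ξ := by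
  rw [pNorm, one_div, rpow_inv_rpow (sum_nonneg fun j _ => rpow_nonneg (hu j) ξ) hξ]

theorem continuous_pNorm (hξ : 0 < ξ) : Continuous (pNorm (ι := ι) ξ) :=
  (continuous_finsetSum _ fun j _ => (continuous_apply j).rpow_const fun _ => Or.inr hξ.le)
    |>.rpow_const fun _ => Or.inr (by positivity)

theorem pNorm_le_pNorm_rpow_mul_sum (hξ0 : 0 < ξ) (hξ1 : ξ ≤ 1) (hu : ∀ j, 0 ≤ u j)
    (hv : ∀ j, 0 < v j) : pNorm ξ u ≤ pNorm ξ v ^ (1 - ξ) * ∑ j, u j * v j ^ (ξ - 1) := by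
  have holder := inner_le_weight_mul_Lp_of_nonneg univ (p := ξ⁻¹) (one_le_inv₀ hξ0 |>.2 hξ1)
    (fun j => v j ^ ξ) (fun j => (u j / v j) ^ ξ) (fun j => rpow_nonneg (hv j).le ξ)
    (fun j => rpow_nonneg (div_nonneg (hu j) (hv j).le) ξ)
  have hterm : ∀ j, v j ^ ξ * (u j / v j) ^ ξ = u j ^ ξ := fun j => by
    rw [← mul_rpow (hv j).le (div_nonneg (hu j) (hv j).le), mul_div_cancel₀ _ (hv j).ne']
  have hterm' : ∀ j, v j ^ ξ * ((u j / v j) ^ ξ) ^ ξ⁻¹ = u j * v j ^ (ξ - 1) := fun j => by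
    rw [rpow_rpow_inv (div_nonneg (hu j) (hv j).le) hξ0.ne', rpow_sub_one (hv j).ne']
    field_simp [(hv j).ne']
  simp only [hterm, hterm', inv_inv] at holder
  have hS : 0 ≤ ∑ j, v j ^ ξ := sum_nonneg fun j _ => rpow_nonneg (hv j).le ξ
  have hT : 0 ≤ ∑ j, u j * v j ^ (ξ - 1) :=
    sum_nonneg fun j _ => mul_nonneg (hu j) (rpow_nonneg (hv j).le _)
  calc pNorm ξ u ≤ ((∑ j, v j ^ ξ) ^ (1 - ξ) * (∑ j, u j * v j ^ (ξ - 1)) ^ ξ) ^ (1 / ξ) :=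
        rpow_le_rpow (sum_nonneg fun j _ => rpow_nonneg (hu j) ξ) holder (by positivity)
    _ = pNorm ξ v ^ (1 - ξ) * ∑ j, u j * v j ^ (ξ - 1) := by
        rw [mul_rpow (rpow_nonneg hS _) (rpow_nonneg hT _), one_div,
          rpow_rpow_inv hT hξ0.ne', pNorm, ← rpow_mul hS, ← rpow_mul hS, one_div, mul_comm ξ⁻¹]

variable [DecidableEq ι]

theorem pNorm_le_of_spike (hξ0 : 0 < ξ) (hξ1 : ξ ≤ 1) {a b : ℝ} (ha : 0 < a) (hb : 0 < b)
    (hu : ∀ j, 0 ≤ u j) (k : ι) :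
    pNorm ξ u ≤ pNorm ξ (spike k a b) ^ (1 - ξ) *
      (a ^ (ξ - 1) * (⨆ j, u j) + b ^ (ξ - 1) * (∑ j, u j - ⨆ j, u j)) := by
  have : Nonempty ι := ⟨k⟩
  obtain ⟨i, hi⟩ := exists_eq_ciSup_of_finite (f := u)
  have h := pNorm_le_pNorm_rpow_mul_sum hξ0 hξ1 hu (v := spike i a b) fun j => spike_pos ha hb
  simp only [spike_rpow, sum_mul_spike, hi] at h
  rwa [pNorm_spike, ← pNorm_spike ξ k] at h

end PNorm

section Degenerate

variable {ι : Type*} [Fintype ι] {ξ : ℝ} {u : ι → ℝ}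

theorem iSup_le_sum (hu : ∀ j, 0 ≤ u j) : ⨆ j, u j ≤ ∑ j, u j :=
  Real.iSup_le (fun j => single_le_sum (fun i _ => hu i) (mem_univ j)) (sum_nonneg fun j _ => hu j)

theorem eq_spike_of_iSup_eq_sum [DecidableEq ι] (hu : ∀ j, 0 ≤ u j) {i : ι}
    (hi : u i = ∑ j, u j) : u = spike i (u i) 0 := by
  have hrest : ∑ j ∈ univ.erase i, u j = 0 := by rw [sum_erase_eq_sub (mem_univ i), hi, sub_self]
  funext j
  by_cases hj : j = i
  · rw [hj, spike, if_pos rfl]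
  · rw [spike, if_neg hj]
    exact (sum_eq_zero_iff_of_nonneg fun j _ => hu j).1 hrest j (mem_erase.2 ⟨hj, mem_univ j⟩)

theorem pNorm_eq_sum_of_iSup_eq_sum [Nonempty ι] (hξ : ξ ≠ 0) (hu : ∀ j, 0 ≤ u j)
    (h : ⨆ j, u j = ∑ j, u j) : pNorm ξ u = ∑ j, u j := by
  classical
  obtain ⟨i, hi⟩ := exists_eq_ciSup_of_finite (f := u)
  rw [← h, ← hi, eq_spike_of_iSup_eq_sum hu (hi.trans h), pNorm_spike, zero_rpow hξ, mul_zero,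
    add_zero, one_div, rpow_rpow_inv (hu i) hξ, spike, if_pos rfl]

end Degenerate

section Measure

variable {ι : Type*} [Fintype ι] {ξ : ℝ} {H : Measure (ι → ℝ)} [IsFiniteMeasure H]

theorem continuous_iSup_apply [Nonempty ι] : Continuous fun u : ι → ℝ => ⨆ j, u j := by
  simp_rw [← sup'_univ_eq_ciSup]
  exact Continuous.finset_sup'_apply univ_nonempty fun j _ => continuous_apply j

theorem integrable_of_ae_mem_stdSimplex (hH : ∀ᵐ u ∂H, u ∈ stdSimplex ℝ ι)
    {f : (ι → ℝ) → ℝ} (hf : Continuous f) : Integrable f H := by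
  obtain ⟨C, hC⟩ := (isCompact_stdSimplex ℝ ι).exists_bound_of_continuousOn hf.continuousOn
  exact (integrable_const C).mono' hf.aestronglyMeasurable (hH.mono hC)

theorem integral_sum_eq_card (hH : ∀ᵐ u ∂H, u ∈ stdSimplex ℝ ι)
    (hmarg : ∀ j, ∫ u, u j ∂H = 1) : ∫ u, ∑ j, u j ∂H = Fintype.card ι := by
  rw [integral_finsetSum _ fun j _ => integrable_of_ae_mem_stdSimplex hH (continuous_apply j)]
  simp [hmarg]

theorem integral_pNorm_eq_integral_sum [Nonempty ι] (hξ : 0 < ξ)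
    (hH : ∀ᵐ u ∂H, u ∈ stdSimplex ℝ ι) (h : ∫ u, ⨆ j, u j ∂H = ∫ u, ∑ j, u j ∂H) :
    ∫ u, pNorm ξ u ∂H = ∫ u, ∑ j, u j ∂H := by
  have hint_sup := integrable_of_ae_mem_stdSimplex hH continuous_iSup_apply
  have hint_sum := integrable_of_ae_mem_stdSimplex hH
    (f := fun u => ∑ j, u j) (by fun_prop)
  have hgap : ∫ u, (∑ j, u j - ⨆ j, u j) ∂H = 0 := by
    rw [integral_sub hint_sum hint_sup, h, sub_self]
  have hgap_nonneg : 0 ≤ᵐ[H] fun u => ∑ j, u j - ⨆ j, u j :=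
    hH.mono fun u hu => sub_nonneg.2 (iSup_le_sum hu.1)
  have hgap_ae := (integral_eq_zero_iff_of_nonneg_ae hgap_nonneg (hint_sum.sub hint_sup)).1 hgap
  refine integral_congr_ae ?_
  filter_upwards [hH, hgap_ae] with u hu hu_gap
  exact pNorm_eq_sum_of_iSup_eq_sum hξ.ne' hu.1 (sub_eq_zero.1 hu_gap).symm

variable [DecidableEq ι]

theorem integral_pNorm_le_of_pos (hξ0 : 0 < ξ) (hξ1 : ξ ≤ 1) {a b : ℝ} (ha : 0 < a) (hb : 0 < b)
    (hab : a + (Fintype.card ι - 1) * b = 1) (hH : ∀ᵐ u ∂H, u ∈ stdSimplex ℝ ι)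
    (hsum : ∫ u, ∑ j, u j ∂H = Fintype.card ι)
    (hsup : ∫ u, ⨆ j, u j ∂H = Fintype.card ι * a) (k : ι) :
    ∫ u, pNorm ξ u ∂H ≤ Fintype.card ι * pNorm ξ (spike k a b) := by
  have : Nonempty ι := ⟨k⟩
  set n : ℝ := (Fintype.card ι : ℝ)
  set L := pNorm ξ (spike k a b)
  have hL : L ^ ξ = a ^ ξ + (n - 1) * b ^ ξ := by
    rw [pNorm_rpow hξ0.ne' fun j => (spike_pos ha hb).le]
    simp only [spike_rpow, sum_spike, n]
  have hint_sup := integrable_of_ae_mem_stdSimplex hH continuous_iSup_apply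
  have hint_sum := integrable_of_ae_mem_stdSimplex hH
    (f := fun u => ∑ j, u j) (by fun_prop)
  have hint_gap : Integrable (fun u => ∑ j, u j - ⨆ j, u j) H := hint_sum.sub hint_sup
  have hint_bound : Integrable
      (fun u => a ^ (ξ - 1) * (⨆ j, u j) + b ^ (ξ - 1) * (∑ j, u j - ⨆ j, u j)) H :=
    (hint_sup.const_mul _).add (hint_gap.const_mul _)
  have hL0 : 0 ≤ L := rpow_nonneg (sum_nonneg fun j _ => rpow_nonneg (spike_pos ha hb).le ξ) _
  calc ∫ u, pNorm ξ u ∂H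
      ≤ ∫ u, L ^ (1 - ξ) *
          (a ^ (ξ - 1) * (⨆ j, u j) + b ^ (ξ - 1) * (∑ j, u j - ⨆ j, u j)) ∂H :=
        integral_mono_ae (integrable_of_ae_mem_stdSimplex hH (continuous_pNorm hξ0))
          (hint_bound.const_mul _) (hH.mono fun u hu => pNorm_le_of_spike hξ0 hξ1 ha hb hu.1 k)
    _ = L ^ (1 - ξ) * (a ^ (ξ - 1) * (n * a) + b ^ (ξ - 1) * (n - n * a)) := by
        rw [integral_const_mul, integral_add (hint_sup.const_mul _) (hint_gap.const_mul _),
          integral_const_mul, integral_const_mul, integral_sub hint_sum hint_sup, hsum, hsup]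
    _ = n * (L ^ (1 - ξ) * L ^ ξ) := by
        have hgap : n - n * a = n * (n - 1) * b := by linear_combination -n * hab
        rw [hL, hgap, rpow_sub_one ha.ne', rpow_sub_one hb.ne']
        field_simp
    _ = n * L := by rw [← rpow_add' hL0 (by norm_num), sub_add_cancel, rpow_one]

theorem integral_pNorm_le (hξ0 : 0 < ξ) (hξ1 : ξ ≤ 1) {a b : ℝ} (ha : 0 < a) (hb : 0 ≤ b)
    (hab : a + (Fintype.card ι - 1) * b = 1) (hH : ∀ᵐ u ∂H, u ∈ stdSimplex ℝ ι)
    (hmarg : ∀ j, ∫ u, u j ∂H = 1) (hsup : ∫ u, ⨆ j, u j ∂H = Fintype.card ι * a) (k : ι) :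
    ∫ u, pNorm ξ u ∂H ≤ Fintype.card ι * pNorm ξ (spike k a b) := by
  have hsum := integral_sum_eq_card hH hmarg
  obtain rfl | hb := hb.eq_or_lt
  · have : Nonempty ι := ⟨k⟩
    obtain rfl : a = 1 := by simpa using hab
    rw [integral_pNorm_eq_integral_sum hξ0 hH (by rw [hsup, hsum, mul_one]), hsum, pNorm_spike,
      zero_rpow hξ0.ne', one_rpow, mul_zero, add_zero, one_rpow, mul_one]
  · exact integral_pNorm_le_of_pos hξ0 hξ1 ha hb hab hH hsum hsup k

end Measure

theorem integral_finsetSum_dirac {α κ E : Type*} [MeasurableSpace α] [MeasurableSingletonClass α]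
    [Fintype κ] [NormedAddCommGroup E] [NormedSpace ℝ E] [CompleteSpace E] (e : κ → α)
    (f : α → E) :
    ∫ x, f x ∂(∑ k, Measure.dirac (e k)) = ∑ k, f (e k) := by
  rw [integral_finsetSum_measure fun k _ => integrable_dirac (by simp)]
  simp only [integral_dirac]

noncomputable def spikeMeasure (ι : Type*) [Fintype ι] [DecidableEq ι] (a b : ℝ) :
    Measure (ι → ℝ) :=
  ∑ k, Measure.dirac (spike k a b)

section SpikeMeasure

variable {ι : Type*} [Fintype ι] [DecidableEq ι] {a b : ℝ}

instance : IsFiniteMeasure (spikeMeasure ι a b) := by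
  unfold spikeMeasure; infer_instance

theorem spikeMeasure_compl_stdSimplex (ha : 0 ≤ a) (hb : 0 ≤ b)
    (hab : a + (Fintype.card ι - 1) * b = 1) : spikeMeasure ι a b (stdSimplex ℝ ι)ᶜ = 0 := by
  simp [spikeMeasure, Measure.dirac_apply, spike_mem_stdSimplex ha hb hab]

theorem integral_apply_spikeMeasure (j : ι) :
    ∫ u, u j ∂spikeMeasure ι a b = a + (Fintype.card ι - 1) * b := by
  rw [spikeMeasure, integral_finsetSum_dirac, ← sum_spike j]
  exact sum_congr rfl fun k _ => spike_comm

theorem integral_iSup_spikeMeasure (hba : b ≤ a) :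
    ∫ u, ⨆ j, u j ∂spikeMeasure ι a b = Fintype.card ι * a := by
  simp [spikeMeasure, integral_finsetSum_dirac, iSup_spike hba]

theorem integral_pNorm_spikeMeasure (ξ : ℝ) (k : ι) :
    ∫ u, pNorm ξ u ∂spikeMeasure ι a b = Fintype.card ι * pNorm ξ (spike k a b) := by
  simp [spikeMeasure, integral_finsetSum_dirac, pNorm_spike]

end SpikeMeasure

section Weights

variable {n ϑ : ℝ}

theorem div_add_mul_sub_div_eq_one (hn : 1 < n) :
    ϑ / n + (n - 1) * ((n - ϑ) / (n * (n - 1))) = 1 := by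
  have : n - 1 ≠ 0 := by linarith
  field_simp
  ring

theorem sub_div_mul_le_div (hn : 1 < n) (hϑ : 1 ≤ ϑ) : (n - ϑ) / (n * (n - 1)) ≤ ϑ / n := by
  rw [div_le_div_iff₀ (by nlinarith) (by positivity)]
  nlinarith [mul_nonneg (mul_self_nonneg n) (sub_nonneg.2 hϑ)]

theorem mul_rpow_add_mul_rpow_eq {ξ : ℝ} (hξ : ξ ≠ 0) (hn : 1 < n) (hϑ0 : 0 ≤ ϑ) (hϑn : ϑ ≤ n) :
    n * ((ϑ / n) ^ ξ + (n - 1) * ((n - ϑ) / (n * (n - 1))) ^ ξ) ^ (1 / ξ) =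
      (ϑ ^ ξ + (n - 1) ^ (1 - ξ) * (n - ϑ) ^ ξ) ^ (1 / ξ) := by
  have hn0 : 0 < n := by linarith
  have hn1 : 0 < n - 1 := by linarith
  have hsum : n ^ ξ * ((ϑ / n) ^ ξ + (n - 1) * ((n - ϑ) / (n * (n - 1))) ^ ξ) =
      ϑ ^ ξ + (n - 1) ^ (1 - ξ) * (n - ϑ) ^ ξ := by
    have hb : n * ((n - ϑ) / (n * (n - 1))) = (n - ϑ) / (n - 1) := by field_simp
    rw [mul_add, ← mul_rpow hn0.le (by positivity), mul_div_cancel₀ _ hn0.ne', mul_left_comm,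
      ← mul_rpow hn0.le (div_nonneg (by linarith) (by positivity)), hb,
      div_rpow (by linarith) hn1.le, rpow_sub hn1, rpow_one]
    ring
  rw [← hsum, mul_rpow (rpow_nonneg hn0.le ξ) (by positivity), one_div,
    rpow_rpow_inv hn0.le hξ]

end Weights

/-- Theorem 3.6 (closed-form upper bound): among finite measures on the unit simplex
with unit marginals and d-variate extremal coefficient `ϑ`, the supremum of
`∫ (Σ_j u_j^ξ)^{1/ξ} dH` equals `U(ϑ) = (ϑ^ξ + (d-1)^{1-ξ}(d-ϑ)^ξ)^{1/ξ}`, attained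
by the discrete measure `H = Σ_{k=1}^d δ_{u_k}` with `u_k` having k-th coordinate `ϑ/d`
and all others `(d-ϑ)/(d(d-1))`. -/
theorem closed_form_upper_bound (d : ℕ) (hd : 2 ≤ d) (ξ : ℝ) (hξ0 : 0 < ξ) (hξ1 : ξ ≤ 1)
    (ϑ : ℝ) (hϑ : ϑ ∈ Set.Icc (1 : ℝ) d) :
    IsGreatest
      { r : ℝ | ∃ H : Measure (Fin d → ℝ), IsFiniteMeasure H ∧
          H {u | ¬ ((∀ j, 0 ≤ u j) ∧ ∑ j, u j = 1)} = 0 ∧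
          (∀ j, ∫ u, u j ∂H = 1) ∧
          (∫ u, (⨆ j, u j) ∂H = ϑ) ∧
          r = ∫ u, (∑ j, (u j) ^ ξ) ^ (1 / ξ) ∂H }
      ((ϑ ^ ξ + ((d : ℝ) - 1) ^ (1 - ξ) * ((d : ℝ) - ϑ) ^ ξ) ^ (1 / ξ)) ∧
    (∫ u, (∑ j, (u j) ^ ξ) ^ (1 / ξ)
        ∂(∑ k : Fin d, Measure.dirac
            (fun j : Fin d => if j = k then ϑ / d else ((d : ℝ) - ϑ) / (d * ((d : ℝ) - 1)))))
      = (ϑ ^ ξ + ((d : ℝ) - 1) ^ (1 - ξ) * ((d : ℝ) - ϑ) ^ ξ) ^ (1 / ξ) := by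
  obtain ⟨hϑ1, hϑd⟩ := hϑ
  have hd1 : (1 : ℝ) < d := by exact_mod_cast hd
  have hcard : (Fintype.card (Fin d) : ℝ) = d := by simp
  set a := ϑ / d
  set b := ((d : ℝ) - ϑ) / (d * ((d : ℝ) - 1))
  have ha : 0 < a := by positivity
  have hb : 0 ≤ b := div_nonneg (by linarith) (by nlinarith)
  have hab : a + (Fintype.card (Fin d) - 1) * b = 1 := hcard ▸ div_add_mul_sub_div_eq_one hd1
  have hda : (d : ℝ) * a = ϑ := mul_div_cancel₀ _ (by positivity)
  let k : Fin d := ⟨0, by omega⟩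
  have hU : d * pNorm ξ (spike k a b) = (ϑ ^ ξ + (d - 1) ^ (1 - ξ) * (d - ϑ) ^ ξ) ^ (1 / ξ) := by
    rw [pNorm_spike, hcard]
    exact mul_rpow_add_mul_rpow_eq hξ0.ne' hd1 (by linarith) hϑd
  have hvalue : ∫ u, pNorm ξ u ∂spikeMeasure (Fin d) a b =
      (ϑ ^ ξ + (d - 1) ^ (1 - ξ) * (d - ϑ) ^ ξ) ^ (1 / ξ) := by
    rw [integral_pNorm_spikeMeasure ξ k, hcard, hU]
  refine ⟨⟨⟨spikeMeasure (Fin d) a b, inferInstance, spikeMeasure_compl_stdSimplex ha.le hb hab,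
    fun j => (integral_apply_spikeMeasure j).trans hab, ?_, hvalue.symm⟩, ?_⟩, hvalue⟩
  · rw [integral_iSup_spikeMeasure (sub_div_mul_le_div hd1 hϑ1), hcard, hda]
  · rintro r ⟨H, hH, hnull, hmarg, hsup, rfl⟩
    rw [← hU, ← hcard]
    exact integral_pNorm_le hξ0 hξ1 ha hb hab (ae_iff.2 hnull) hmarg (by rw [hsup, hcard, hda]) k
end

section
/- Let d ≥ 2, 0 < ξ ≤ 1, ϑ ∈ [1, d], and let k ∈ {1,...,d-1} be such that d/(k+1) ≤ ϑ < d/k (for ϑ = 1 take k = d-1 with d/(k+1) ≤ ϑ ≤ d/k). Write ϑ = λ·(d/k) + (1-λ)·(d/(k+1)) with λ = (ϑ/d - 1/(k+1))/(1/k - 1/(k+1)) ∈ [0,1]. Define the discrete measure H placing, uniformly over all subsets K ⊆ {1,...,d} with |K| = k, mass (λd/k)·C(d,k)^{-1}·k at the point |K|^{-1}·𝟙_K ∈ S₊, and over all subsets with |K| = k+1, mass ((1-λ)d/(k+1))·C(d,k+1)^{-1}·(k+1) at |K|^{-1}·𝟙_K. Then H satisfies ∫ u_j dH = 1 for each j and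 ∫ max_{j∈{1,...,d}} u_j dH = ϑ. -/
/-!
Coordinate `j` of the atom `|K|⁻¹ 𝟙_K` is `1/m` for the `C(d-1, m-1)` sets `K` of size `m`
containing `j`, and its maximum is `1/m`. So the size-`k` atoms, each of mass `λ d / C(d,k)`,
contribute `λ` to every marginal and `λ d/k` to the integral of the maximum, while the
size-`(k+1)` atoms contribute `1 - λ` and `(1 - λ) d/(k+1)`. The sums are `1` and, by the choice
of `λ`, exactly `ϑ`. The masses are nonnegative because `d/(k+1) ≤ ϑ ≤ d/k` puts `λ` in `[0,1]`.
-/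

open MeasureTheory Finset

section WeightedDirac

variable {α ι E : Type*} [MeasurableSpace α] [MeasurableSingletonClass α] [NormedAddCommGroup E]

lemma integrable_sum_ofReal_smul_dirac (f : α → E) (s : Finset ι) (c : ι → ℝ) (x : ι → α) :
    Integrable f (∑ i ∈ s, ENNReal.ofReal (c i) • Measure.dirac (x i)) :=
  integrable_finsetSum_measure.2 fun _ _ =>
    (integrable_dirac enorm_lt_top).smul_measure ENNReal.ofReal_ne_top

lemma integral_sum_ofReal_smul_dirac [NormedSpace ℝ E] [CompleteSpace E] (f : α → E)
    (s : Finset ι) {c : ι → ℝ} (hc : ∀ i ∈ s, 0 ≤ c i) (x : ι → α) :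
    ∫ u, f u ∂(∑ i ∈ s, ENNReal.ofReal (c i) • Measure.dirac (x i)) = ∑ i ∈ s, c i • f (x i) := by
  rw [integral_finsetSum_measure fun _ _ =>
    (integrable_dirac enorm_lt_top).smul_measure ENNReal.ofReal_ne_top]
  refine sum_congr rfl fun i hi => ?_
  rw [integral_smul_measure, integral_dirac, ENNReal.toReal_ofReal (hc i hi)]

end WeightedDirac

lemma sub_div_sub_mem_Icc {𝕜 : Type*} [Field 𝕜] [LinearOrder 𝕜] [IsStrictOrderedRing 𝕜]
    {a b x : 𝕜} (hab : a < b) (hx : x ∈ Set.Icc a b) : (x - a) / (b - a) ∈ Set.Icc 0 1 :=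
  ⟨div_nonneg (sub_nonneg.2 hx.1) (sub_nonneg.2 hab.le),
    (div_le_one (sub_pos.2 hab)).2 (sub_le_sub_right hx.2 a)⟩

noncomputable section SimplexAtom

variable {ι : Type*} [Fintype ι] [DecidableEq ι]

def simplexAtom (K : Finset ι) : ι → ℝ := fun j => if j ∈ K then (#K : ℝ)⁻¹ else 0

lemma iSup_simplexAtom {K : Finset ι} (hK : K.Nonempty) : ⨆ j, simplexAtom K j = (#K : ℝ)⁻¹ := by
  obtain ⟨j₀, hj₀⟩ := hK
  have : Nonempty ι := ⟨j₀⟩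
  refine le_antisymm (ciSup_le fun j => ?_) <|
    le_ciSup_of_le (Set.finite_range _).bddAbove j₀ (by simp [simplexAtom, hj₀])
  unfold simplexAtom
  split_ifs
  exacts [le_rfl, by positivity]

lemma sum_powersetCard_simplexAtom_apply {m : ℕ} (hm : 1 ≤ m) (j : ι) :
    ∑ K ∈ powersetCard m univ, simplexAtom K j
      = ((Fintype.card ι).choose m : ℝ) / Fintype.card ι := by
  have hcount : #{K ∈ powersetCard m (univ : Finset ι) | j ∈ K}
      = (Fintype.card ι - 1).choose (m - 1) := by
    simpa using card_filter_powersetCard_subset {j} univ m (subset_univ _) (by simpa using hm)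
  have hn : 1 ≤ Fintype.card ι := Fintype.card_pos_iff.2 ⟨j⟩
  have hchoose : Fintype.card ι * (Fintype.card ι - 1).choose (m - 1)
      = (Fintype.card ι).choose m * m := by
    simpa only [Nat.sub_add_cancel hn, Nat.sub_add_cancel hm] using
      Nat.add_one_mul_choose_eq (Fintype.card ι - 1) (m - 1)
  calc ∑ K ∈ powersetCard m univ, simplexAtom K j
      = ∑ K ∈ powersetCard m univ, if j ∈ K then (m : ℝ)⁻¹ else 0 := by
        refine sum_congr rfl fun K hK => ?_
        rw [simplexAtom, (mem_powersetCard.1 hK).2]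
    _ = ((Fintype.card ι - 1).choose (m - 1) : ℝ) * (m : ℝ)⁻¹ := by
        rw [← sum_filter, sum_const, hcount, nsmul_eq_mul]
    _ = ((Fintype.card ι).choose m : ℝ) / Fintype.card ι := by
        have hn' : (0 : ℝ) < Fintype.card ι := by exact_mod_cast hn
        have hm' : (0 : ℝ) < m := by exact_mod_cast hm
        field_simp
        norm_cast
        linarith

lemma sum_powersetCard_iSup_simplexAtom {m : ℕ} (hm : 1 ≤ m) :
    ∑ K ∈ powersetCard m (univ : Finset ι), ⨆ j, simplexAtom K j
      = ((Fintype.card ι).choose m : ℝ) / m := by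
  calc ∑ K ∈ powersetCard m (univ : Finset ι), ⨆ j, simplexAtom K j
      = ∑ K ∈ powersetCard m (univ : Finset ι), (m : ℝ)⁻¹ := by
        refine sum_congr rfl fun K hK => ?_
        have hK := (mem_powersetCard.1 hK).2
        rw [iSup_simplexAtom (card_pos.1 (by omega)), hK]
    _ = ((Fintype.card ι).choose m : ℝ) / m := by
        rw [sum_const, card_powersetCard, card_univ, nsmul_eq_mul, div_eq_mul_inv]

def simplexLayer (m : ℕ) (w : ℝ) : Measure (ι → ℝ) :=
  ∑ K ∈ powersetCard m univ, ENNReal.ofReal w • Measure.dirac (simplexAtom K)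

lemma integrable_simplexLayer (f : (ι → ℝ) → ℝ) (m : ℕ) (w : ℝ) :
    Integrable f (simplexLayer m w) :=
  integrable_sum_ofReal_smul_dirac f _ _ _

lemma integral_eval_simplexLayer {m : ℕ} (hm : 1 ≤ m) {w : ℝ} (hw : 0 ≤ w) (j : ι) :
    ∫ u, u j ∂simplexLayer m w = w * (Fintype.card ι).choose m / Fintype.card ι := by
  rw [simplexLayer, integral_sum_ofReal_smul_dirac _ _ fun _ _ => hw, ← smul_sum,
    sum_powersetCard_simplexAtom_apply hm, smul_eq_mul, mul_div_assoc]

lemma integral_iSup_simplexLayer {m : ℕ} (hm : 1 ≤ m) {w : ℝ} (hw : 0 ≤ w) :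
    ∫ u, (⨆ j, u j) ∂simplexLayer (ι := ι) m w = w * (Fintype.card ι).choose m / m := by
  rw [simplexLayer, integral_sum_ofReal_smul_dirac _ _ fun _ _ => hw, ← smul_sum,
    sum_powersetCard_iSup_simplexAtom hm, smul_eq_mul, mul_div_assoc]

end SimplexAtom

theorem tawn_molchanov_dual_feasibility_general (d : ℕ) (ϑ : ℝ)
    (k : ℕ) (hk1 : 1 ≤ k) (hkd : k ≤ d - 1)
    (hlow : (d : ℝ) / (k + 1) ≤ ϑ) (hupp : ϑ ≤ (d : ℝ) / k)
    (lam : ℝ) (hlam : lam = (ϑ / d - 1 / ((k : ℝ) + 1)) / (1 / (k : ℝ) - 1 / ((k : ℝ) + 1)))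
    (H : Measure (Fin d → ℝ))
    (hH : H =
      (∑ K ∈ Finset.univ.powerset.filter (fun K : Finset (Fin d) => K.card = k),
        ENNReal.ofReal ((lam * d / k) * ((Nat.choose d k : ℝ))⁻¹ * k) •
          Measure.dirac (fun j : Fin d => if j ∈ K then ((K.card : ℝ))⁻¹ else 0))
      + (∑ K ∈ Finset.univ.powerset.filter (fun K : Finset (Fin d) => K.card = k + 1),
        ENNReal.ofReal (((1 - lam) * d / (k + 1)) * ((Nat.choose d (k + 1) : ℝ))⁻¹ * (k + 1)) •
          Measure.dirac (fun j : Fin d => if j ∈ K then ((K.card : ℝ))⁻¹ else 0))) :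
    (∀ j : Fin d, ∫ u, u j ∂H = 1) ∧ ∫ u, (⨆ j, u j) ∂H = ϑ := by
  have hk : (0 : ℝ) < k := by exact_mod_cast hk1
  have hd : (0 : ℝ) < d := by exact_mod_cast (show 0 < d by omega)
  have hchoose₁ : (0 : ℝ) < d.choose k := by exact_mod_cast Nat.choose_pos (by omega)
  have hchoose₂ : (0 : ℝ) < d.choose (k + 1) := by exact_mod_cast Nat.choose_pos (by omega)
  obtain ⟨hlam₀, hlam₁⟩ : lam ∈ Set.Icc 0 1 := by
    refine hlam ▸ sub_div_sub_mem_Icc (one_div_lt_one_div_of_lt hk (lt_add_one _)) ⟨?_, ?_⟩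
    · rwa [div_le_div_iff₀ (by positivity) hd, one_mul, ← div_le_iff₀ (by positivity)]
    · rwa [div_le_div_iff₀ hd hk, one_mul, mul_comm, ← le_div_iff₀' hk]
  set w₁ : ℝ := (lam * d / k) * ((Nat.choose d k : ℝ))⁻¹ * k
  set w₂ : ℝ := ((1 - lam) * d / (k + 1)) * ((Nat.choose d (k + 1) : ℝ))⁻¹ * (k + 1)
  have hw₁ : 0 ≤ w₁ := by positivity
  have hw₂ : 0 ≤ w₂ := by have := sub_nonneg.2 hlam₁; positivity
  have hH' : H = simplexLayer k w₁ + simplexLayer (k + 1) w₂ := by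
    rw [hH, simplexLayer, simplexLayer, powersetCard_eq_filter, powersetCard_eq_filter]
    rfl
  have hmass₁ : w₁ * d.choose k = lam * d := by simp only [w₁]; field_simp
  have hmass₂ : w₂ * d.choose (k + 1) = (1 - lam) * d := by simp only [w₂]; field_simp
  rw [hH']
  refine ⟨fun j => ?_, ?_⟩
  · rw [integral_add_measure (integrable_simplexLayer _ _ _) (integrable_simplexLayer _ _ _),
      integral_eval_simplexLayer hk1 hw₁, integral_eval_simplexLayer (by omega) hw₂,
      Fintype.card_fin, hmass₁, hmass₂]
    field_simp
    ring
  · rw [integral_add_measure (integrable_simplexLayer _ _ _) (integrable_simplexLayer _ _ _),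
      integral_iSup_simplexLayer hk1 hw₁, integral_iSup_simplexLayer (by omega) hw₂,
      Fintype.card_fin, hmass₁, hmass₂, hlam]
    push_cast
    field_simp
    ring

/-- Dual feasibility in Theorem 3.5: the Tawn–Molchanov-type discrete measure supported
on the symmetric atoms `|K|⁻¹·𝟙_K` for `|K| ∈ {k, k+1}`, with masses
`(λd/k)·C(d,k)⁻¹·k` and `((1-λ)d/(k+1))·C(d,k+1)⁻¹·(k+1)` respectively, satisfies the
marginal constraints `∫ u_j dH = 1` and the d-variate constraint `∫ max_j u_j dH = ϑ`. -/
theorem tawn_molchanov_dual_feasibility (d : ℕ) (hd : 2 ≤ d)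
    (ξ : ℝ) (hξ0 : 0 < ξ) (hξ1 : ξ ≤ 1)
    (ϑ : ℝ) (hϑ : ϑ ∈ Set.Icc (1 : ℝ) d)
    (k : ℕ) (hk1 : 1 ≤ k) (hkd : k ≤ d - 1)
    (hlow : (d : ℝ) / (k + 1) ≤ ϑ) (hupp : ϑ ≤ (d : ℝ) / k)
    (lam : ℝ) (hlam : lam = (ϑ / d - 1 / ((k : ℝ) + 1)) / (1 / (k : ℝ) - 1 / ((k : ℝ) + 1)))
    (H : Measure (Fin d → ℝ))
    (hH : H =
      (∑ K ∈ Finset.univ.powerset.filter (fun K : Finset (Fin d) => K.card = k),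
        ENNReal.ofReal ((lam * d / k) * ((Nat.choose d k : ℝ))⁻¹ * k) •
          Measure.dirac (fun j : Fin d => if j ∈ K then ((K.card : ℝ))⁻¹ else 0))
      + (∑ K ∈ Finset.univ.powerset.filter (fun K : Finset (Fin d) => K.card = k + 1),
        ENNReal.ofReal (((1 - lam) * d / (k + 1)) * ((Nat.choose d (k + 1) : ℝ))⁻¹ * (k + 1)) •
          Measure.dirac (fun j : Fin d => if j ∈ K then ((K.card : ℝ))⁻¹ else 0))) :
    (∀ j : Fin d, ∫ u, u j ∂H = 1) ∧ ∫ u, (⨆ j, u j) ∂H = ϑ :=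
  tawn_molchanov_dual_feasibility_general d ϑ k hk1 hkd hlow hupp lam hlam H hH
end
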